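/- arXiv:2006.04778 — 7 statements merged into one kernel-verified Lean document; each statement's English description precedes it below -/
import Mathlib

section
/- Let f : X → {0,1} be any fixed classifier and ε ∈ (0, 0.5). With probability at least 1 − 2·exp(−ε²N/6) over the flipping noise, for both i ∈ {0,1}: (1−η_{1−i})·Pr[f=1, Ẑ=i] − η_{1−i}·Pr[f=1, Ẑ=1−i] lies in the interval [(1−η_0−η_1)·Pr_D[f=1, Z=i] − ε, (1−η_0−η_1)·Pr_D[f=1, Z=i] + ε]. -/
open scoped Classical

noncomputable section

/-- Empirical frequency of a predicate over `N` samples. -/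
def empFreq (N : ℕ) (P : Fin N → Prop) : ℝ :=
  ((Finset.univ.filter P).card : ℝ) / N

/-- Probability, over independent flipping noise with rates `η0` (when `Z = 0`) and `η1`
(when `Z = 1`), of an event on the noisy binary protected attributes. -/
def noiseProb (N : ℕ) (z : Fin N → Bool) (η0 η1 : ℝ)
    (E : (Fin N → Bool) → Prop) : ℝ :=
  ∑ zh : Fin N → Bool,
    if E zh then
      ∏ a, (if zh a = z a then 1 - cond (z a) η1 η0 else cond (z a) η1 η0)
    else 0

/-! The debiased statistic of group `i` differs from `(1 - η0 - η1) · Pr_D[f = 1, Z = i]` by exactly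
`±S / N`, where `S` is the number of samples with `f = 1` and `ẑ = 1` minus its expectation under
the noise. `S` is a sum of independent centred variables with values in intervals of length one,
so Hoeffding's inequality gives `Pr[|S| ≥ εN] ≤ 2 · exp(-2ε²N)`. -/

open MeasureTheory

section Hoeffding

open ProbabilityTheory

variable {ι : Type*} [Fintype ι] {Ω : ι → Type*} [∀ i, MeasurableSpace (Ω i)]
  {μ : ∀ i, Measure (Ω i)} [∀ i, IsProbabilityMeasure (μ i)]

theorem measureReal_pi_sum_sub_integral_ge_le {g : ∀ i, Ω i → ℝ} (hg : ∀ i, Measurable (g i))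
    (hg01 : ∀ i ω, g i ω ∈ Set.Icc 0 1) {s : ℝ} (hs : 0 ≤ s) :
    (Measure.pi μ).real {ω | s ≤ ∑ i, (g i (ω i) - ∫ x, g i x ∂μ i)} ≤
      Real.exp (-2 * s ^ 2 / Fintype.card ι) := by
  have h_indep : iIndepFun (fun i (ω : ∀ i, Ω i) ↦ g i (ω i) - ∫ x, g i x ∂μ i) (Measure.pi μ) :=
    iIndepFun_pi fun i ↦ ((hg i).sub_const _).aemeasurable
  have h_subG : ∀ i ∈ Finset.univ, HasSubgaussianMGF
      (fun ω : ∀ i, Ω i ↦ g i (ω i) - ∫ x, g i x ∂μ i) ((‖(1 : ℝ) - 0‖₊ / 2) ^ 2)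
      (Measure.pi μ) := by
    intro i _
    have h := hasSubgaussianMGF_of_mem_Icc (μ := Measure.pi μ) (X := fun ω ↦ g i (ω i))
      ((hg i).comp (measurable_pi_apply i)).aemeasurable (ae_of_all _ fun ω ↦ hg01 i (ω i))
    rwa [integral_comp_eval (hg i).aestronglyMeasurable] at h
  refine (HasSubgaussianMGF.measure_sum_ge_le_of_iIndepFun h_indep h_subG hs).trans_eq ?_
  congr 1
  simp only [sub_zero, nnnorm_one, Finset.sum_const, Finset.card_univ, nsmul_eq_mul,
    NNReal.coe_mul, NNReal.coe_natCast, NNReal.coe_pow, NNReal.coe_div, NNReal.coe_one,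
    NNReal.coe_ofNat]
  ring

theorem measureReal_pi_abs_sum_sub_integral_ge_le {g : ∀ i, Ω i → ℝ}
    (hg : ∀ i, Measurable (g i)) (hg01 : ∀ i ω, g i ω ∈ Set.Icc 0 1) {s : ℝ} (hs : 0 ≤ s) :
    (Measure.pi μ).real {ω | s ≤ |∑ i, (g i (ω i) - ∫ x, g i x ∂μ i)|} ≤
      2 * Real.exp (-2 * s ^ 2 / Fintype.card ι) := by
  have h_compl : ∀ i, ∫ x, (1 - g i x) ∂μ i = 1 - ∫ x, g i x ∂μ i := fun i ↦ by
    rw [integral_sub (integrable_const 1)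
      (Integrable.of_mem_Icc 0 1 (hg i).aemeasurable (ae_of_all _ (hg01 i))), integral_const,
      probReal_univ, one_smul]
  have h_upper := measureReal_pi_sum_sub_integral_ge_le (μ := μ) hg hg01 hs
  have h_lower := measureReal_pi_sum_sub_integral_ge_le (μ := μ)
    (g := fun i x ↦ 1 - g i x) (fun i ↦ (hg i).const_sub 1)
    (fun i ω ↦ ⟨by linarith [(hg01 i ω).2], by linarith [(hg01 i ω).1]⟩) hs
  simp only [h_compl, sub_sub_sub_cancel_left] at h_lower
  calc _ ≤ (Measure.pi μ).real ({ω | s ≤ ∑ i, (g i (ω i) - ∫ x, g i x ∂μ i)} ∪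
          {ω | s ≤ ∑ i, (∫ x, g i x ∂μ i - g i (ω i))}) := by
        refine measureReal_mono fun ω hω ↦ ?_
        simp only [Set.mem_ofPred_eq, Set.mem_union, Finset.sum_sub_distrib] at hω ⊢
        rcases le_abs'.1 hω with h | h
        · right; linarith
        · left; linarith
    _ ≤ _ := (measureReal_union_le _ _).trans (by linarith)

end Hoeffding

theorem measureReal_pi_eq_sum_ite_prod {ι : Type*} [Fintype ι] [DecidableEq ι] {α : ι → Type*}
    [∀ i, Fintype (α i)] [∀ i, MeasurableSpace (α i)] [∀ i, MeasurableSingletonClass (α i)]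
    (μ : ∀ i, Measure (α i)) [∀ i, IsFiniteMeasure (μ i)] (E : (∀ i, α i) → Prop) :
    (Measure.pi μ).real {ω | E ω} = ∑ ω, if E ω then ∏ i, (μ i).real {ω i} else 0 := by
  rw [← Finset.sum_filter, ← Finset.coe_filter_univ, ← sum_measureReal_singleton]
  simp only [measureReal_def, Measure.pi_singleton, ENNReal.toReal_prod]

def flipMeasure (η : ℝ) (b : Bool) : Measure Bool :=
  ENNReal.ofReal (1 - η) • Measure.dirac b + ENNReal.ofReal η • Measure.dirac (!b)

theorem flipMeasure_real_singleton {η : ℝ} (hη₀ : 0 ≤ η) (hη₁ : η ≤ 1) (b b' : Bool) :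
    (flipMeasure η b).real {b'} = if b' = b then 1 - η else η := by
  cases b <;> cases b' <;>
    simp [flipMeasure, measureReal_def, hη₀, ENNReal.toReal_ofReal, sub_nonneg.2 hη₁]

theorem isProbabilityMeasure_flipMeasure {η : ℝ} (hη₀ : 0 ≤ η) (hη₁ : η ≤ 1) (b : Bool) :
    IsProbabilityMeasure (flipMeasure η b) := by
  constructor
  cases b <;> simp [flipMeasure, ← ENNReal.ofReal_add (sub_nonneg.2 hη₁) hη₀]

theorem integral_flipMeasure {η : ℝ} (hη₀ : 0 ≤ η) (hη₁ : η ≤ 1) (b : Bool) (g : Bool → ℝ) :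
    ∫ b', g b' ∂flipMeasure η b = (1 - η) * g b + η * g (!b) := by
  have := isProbabilityMeasure_flipMeasure hη₀ hη₁ b
  rw [integral_fintype .of_finite, Fintype.sum_bool, flipMeasure_real_singleton hη₀ hη₁,
    flipMeasure_real_singleton hη₀ hη₁]
  cases b <;> simp [add_comm]

theorem noiseProb_eq_measureReal_pi_flipMeasure {N : ℕ} (z : Fin N → Bool) {η0 η1 : ℝ}
    (hη : ∀ a, 0 ≤ cond (z a) η1 η0 ∧ cond (z a) η1 η0 ≤ 1) (E : (Fin N → Bool) → Prop) :
    noiseProb N z η0 η1 E =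
      (Measure.pi fun a ↦ flipMeasure (cond (z a) η1 η0) (z a)).real {zh | E zh} := by
  have := fun a ↦ isProbabilityMeasure_flipMeasure (hη a).1 (hη a).2 (z a)
  simp only [measureReal_pi_eq_sum_ite_prod, flipMeasure_real_singleton (hη _).1 (hη _).2,
    noiseProb]

theorem empFreq_eq_sum_ite {N : ℕ} (P : Fin N → Prop) [DecidablePred P] :
    empFreq N P = (∑ a, if P a then 1 else 0) / N := by
  rw [empFreq, Finset.sum_boole]
  congr!

/-- `cond (z a) (1 - η1) η0` is the probability that `ẑ_a = 1`, so this is the count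
`#{a | t a ∧ ẑ_a = 1}` centred under the flipping noise. -/
def noisyCountDeviation {N : ℕ} (η0 η1 : ℝ) (t z zh : Fin N → Bool) : ℝ :=
  ∑ a, ((if t a = true ∧ zh a = true then 1 else 0) -
    if t a = true then cond (z a) (1 - η1) η0 else 0)

theorem debiased_indicator_sub_eq (η0 η1 : ℝ) (t z zh i : Bool) :
    (1 - cond i η0 η1) * (if t = true ∧ zh = i then 1 else 0)
        - cond i η0 η1 * (if t = true ∧ zh = !i then 1 else 0)
        - (1 - η0 - η1) * (if t = true ∧ z = i then 1 else 0) =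
      cond i 1 (-1) * ((if t = true ∧ zh = true then 1 else 0)
        - if t = true then cond z (1 - η1) η0 else 0) := by
  cases t <;> cases zh <;> cases z <;> cases i <;>
    simp only [cond_true, cond_false, Bool.not_true, Bool.not_false, Bool.true_eq_false,
      Bool.false_eq_true, and_true, and_false, and_self, if_true, if_false] <;> ring

theorem debiased_empFreq_sub_eq {N : ℕ} (η0 η1 : ℝ) (t z zh : Fin N → Bool) (i : Bool) :
    (1 - cond i η0 η1) * empFreq N (fun a ↦ t a = true ∧ zh a = i)
        - cond i η0 η1 * empFreq N (fun a ↦ t a = true ∧ zh a = !i)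
        - (1 - η0 - η1) * empFreq N (fun a ↦ t a = true ∧ z a = i) =
      cond i 1 (-1) * noisyCountDeviation η0 η1 t z zh / N := by
  simp only [empFreq_eq_sum_ite, noisyCountDeviation, mul_div_assoc', ← sub_div, Finset.mul_sum,
    ← Finset.sum_sub_distrib, debiased_indicator_sub_eq]

theorem debiased_empFreq_mem_Icc {N : ℕ} {η0 η1 ε : ℝ} (hε : 0 ≤ ε) {t z zh : Fin N → Bool}
    (h : |noisyCountDeviation η0 η1 t z zh| ≤ ε * N) (i : Bool) :
    (1 - cond i η0 η1) * empFreq N (fun a ↦ t a = true ∧ zh a = i)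
        - cond i η0 η1 * empFreq N (fun a ↦ t a = true ∧ zh a = !i)
      ∈ Set.Icc ((1 - η0 - η1) * empFreq N (fun a ↦ t a = true ∧ z a = i) - ε)
        ((1 - η0 - η1) * empFreq N (fun a ↦ t a = true ∧ z a = i) + ε) := by
  have hsign : |cond i (1 : ℝ) (-1)| = 1 := by cases i <;> simp
  rw [← Set.mem_Icc_iff_abs_le, abs_sub_comm, debiased_empFreq_sub_eq, abs_div, abs_mul, hsign,
    one_mul, Nat.abs_cast]
  exact div_le_of_le_mul₀ N.cast_nonneg hε h

theorem stmt_2_general {X : Type} (N : ℕ)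
    (x : Fin N → X) (z : Fin N → Bool)
    (η0 η1 : ℝ) (hη0 : 0 < η0 ∧ η0 < 1/2) (hη1 : 0 < η1 ∧ η1 < 1/2)
    (f : X → Bool) (ε : ℝ) (hε : 0 < ε ∧ ε < 1/2) :
    1 - 2 * Real.exp (-(ε ^ 2 * N) / 6) ≤
      noiseProb N z η0 η1 (fun zh => ∀ i : Bool,
        (1 - cond i η0 η1) * empFreq N (fun a => f (x a) = true ∧ zh a = i)
            - cond i η0 η1 * empFreq N (fun a => f (x a) = true ∧ zh a = !i)
          ∈ Set.Icc
            ((1 - η0 - η1) * empFreq N (fun a => f (x a) = true ∧ z a = i) - ε)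
            ((1 - η0 - η1) * empFreq N (fun a => f (x a) = true ∧ z a = i) + ε)) := by
  have hη : ∀ a, 0 ≤ cond (z a) η1 η0 ∧ cond (z a) η1 η0 ≤ 1 := fun a ↦ by
    cases z a <;> dsimp only [cond] <;> constructor <;> linarith
  have := fun a ↦ isProbabilityMeasure_flipMeasure (hη a).1 (hη a).2 (z a)
  have htail := measureReal_pi_abs_sum_sub_integral_ge_le
    (μ := fun a ↦ flipMeasure (cond (z a) η1 η0) (z a))
    (g := fun a b ↦ if f (x a) = true ∧ b = true then 1 else 0) (fun _ ↦ .of_discrete)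
    (fun a b ↦ by split_ifs <;> simp) (mul_nonneg hε.1.le N.cast_nonneg)
  have hmean : ∀ a, ∫ b, (if f (x a) = true ∧ b = true then 1 else 0)
      ∂flipMeasure (cond (z a) η1 η0) (z a) =
        if f (x a) = true then cond (z a) (1 - η1) η0 else 0 := fun a ↦ by
    rw [integral_flipMeasure (hη a).1 (hη a).2]; cases f (x a) <;> cases z a <;> simp
  simp only [hmean, Fintype.card_fin] at htail
  have hexp : -2 * (ε * N) ^ 2 / N ≤ -(ε ^ 2 * N) / 6 := by
    rw [show -2 * (ε * N) ^ 2 / N = -2 * ε ^ 2 * (N * N / N) by ring, mul_self_div_self]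
    nlinarith [sq_nonneg ε, N.cast_nonneg (α := ℝ)]
  rw [noiseProb_eq_measureReal_pi_flipMeasure z hη, sub_le_comm,
    ← probReal_compl_eq_one_sub .of_discrete]
  calc _ ≤ (Measure.pi fun a ↦ flipMeasure (cond (z a) η1 η0) (z a)).real
        {zh | ε * N ≤ |noisyCountDeviation η0 η1 (fun a ↦ f (x a)) z zh|} := by
        exact measureReal_mono fun zh hzh ↦ not_lt.1 fun hlt ↦
          hzh (debiased_empFreq_mem_Icc hε.1.le hlt.le)
    _ ≤ 2 * Real.exp (-2 * (ε * N) ^ 2 / N) := htail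
    _ ≤ 2 * Real.exp (-(ε ^ 2 * N) / 6) := by gcongr

/-- For any fixed classifier `f` and `ε ∈ (0, 0.5)`, with probability at least
`1 − 2·exp(−ε²N/6)` over the flipping noise, for both `i ∈ {0,1}` (here `i : Bool`, with
`η_{1−i} = cond i η0 η1`):
`(1−η_{1−i})·Pr[f=1, Ẑ=i] − η_{1−i}·Pr[f=1, Ẑ=1−i] ∈ (1−η0−η1)·Pr_D[f=1, Z=i] ± ε`. -/
theorem stmt_2 {X : Type} (N : ℕ) (hN : 1 ≤ N)
    (x : Fin N → X) (z : Fin N → Bool) (y : Fin N → Bool)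
    (η0 η1 : ℝ) (hη0 : 0 < η0 ∧ η0 < 1/2) (hη1 : 0 < η1 ∧ η1 < 1/2)
    (f : X → Bool) (ε : ℝ) (hε : 0 < ε ∧ ε < 1/2) :
    1 - 2 * Real.exp (-(ε ^ 2 * N) / 6) ≤
      noiseProb N z η0 η1 (fun zh => ∀ i : Bool,
        (1 - cond i η0 η1) * empFreq N (fun a => f (x a) = true ∧ zh a = i)
            - cond i η0 η1 * empFreq N (fun a => f (x a) = true ∧ zh a = !i)
          ∈ Set.Icc
            ((1 - η0 - η1) * empFreq N (fun a => f (x a) = true ∧ z a = i) - ε)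
            ((1 - η0 - η1) * empFreq N (fun a => f (x a) = true ∧ z a = i) + ε)) :=
  stmt_2_general N x z η0 η1 hη0 hη1 f ε hε
end
end

section
/- Let f : X → {0,1} be any fixed classifier, ε ∈ (0, 0.5), λ ∈ (0, 0.5), and suppose min_{i∈{0,1}} Pr_D[f=1, Z=i] ≥ λ/2. Then with probability at least 1 − 4·exp(−ε²(1−η_0−η_1)²λ²N/2400) over the flipping noise, the denoised rates Γ_0(f) and Γ_1(f) are well-defined and positive and (1−ε)·γ(f,S) ≤ γ^Δ(f,Ŝ) ≤ (1+ε)·γ(f,S). -/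
open scoped Classical

noncomputable section

/-- `Pr[f = 1, Z' = i]` for the attribute assignment `z'` (true or noisy). -/
def prJoint {X : Type} (N : ℕ) (x : Fin N → X) (f : X → Bool)
    (z' : Fin N → Bool) (i : Bool) : ℝ :=
  empFreq N (fun a => f (x a) = true ∧ z' a = i)

/-- `Pr[Z' = i]` for the attribute assignment `z'`. -/
def muOf (N : ℕ) (z' : Fin N → Bool) (i : Bool) : ℝ :=
  empFreq N (fun a => z' a = i)

/-- `Pr[f = 1 ∣ Z' = i]`. -/
def rate {X : Type} (N : ℕ) (x : Fin N → X) (f : X → Bool)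
    (z' : Fin N → Bool) (i : Bool) : ℝ :=
  prJoint N x f z' i / muOf N z' i

/-- Statistical rate `γ(f, ·)` with respect to attribute assignment `z'`. -/
def gammaSR {X : Type} (N : ℕ) (x : Fin N → X) (f : X → Bool)
    (z' : Fin N → Bool) : ℝ :=
  min (rate N x f z' false) (rate N x f z' true) /
    max (rate N x f z' false) (rate N x f z' true)

/-- Denoised rate `Γ_0(f)`. -/
def Gamma0 {X : Type} (N : ℕ) (x : Fin N → X) (η0 η1 : ℝ) (f : X → Bool)
    (zh : Fin N → Bool) : ℝ :=
  ((1 - η1) * prJoint N x f zh false - η1 * prJoint N x f zh true) /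
    ((1 - η1) * muOf N zh false - η1 * muOf N zh true)

/-- Denoised rate `Γ_1(f)`. -/
def Gamma1 {X : Type} (N : ℕ) (x : Fin N → X) (η0 η1 : ℝ) (f : X → Bool)
    (zh : Fin N → Bool) : ℝ :=
  ((1 - η0) * prJoint N x f zh true - η0 * prJoint N x f zh false) /
    ((1 - η0) * muOf N zh true - η0 * muOf N zh false)

/-- Denoised statistical rate `γ^Δ(f, Ŝ)`. -/
def gammaDelta {X : Type} (N : ℕ) (x : Fin N → X) (η0 η1 : ℝ) (f : X → Bool)
    (zh : Fin N → Bool) : ℝ :=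
  min (Gamma0 N x η0 η1 f zh / Gamma1 N x η0 η1 f zh)
    (Gamma1 N x η0 η1 f zh / Gamma0 N x η0 η1 f zh)

/-!
Under the flipping noise the bits `ẑ_a` are independent, so `N · Pr[f = 1, Ẑ = 1]` and `N · μ̂₁`
are sums of independent bounded variables; a Chernoff bound keeps each within
`δ = ε (1 - η₀ - η₁) λ / 24` of its mean outside probability `2 exp (-3 δ² N / 4)`.
The noise only moves samples between the two groups, so `Pr[f = 1, Ẑ = 0] + Pr[f = 1, Ẑ = 1]`
and `μ̂₀ + μ̂₁` are exact, and then all four denoised numerators and denominators are within `δ` of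
`(1 - η₀ - η₁)` times their noiseless counterparts. As these are at least `(1 - η₀ - η₁) λ / 2`,
that is a relative error `ε / 12`, which moves `Γ₀ / Γ₁` and `Γ₁ / Γ₀` by a factor in
`[1 - ε, 1 + ε]`.
-/

section ProductBernoulli

open Finset Real

variable {ι : Type*} [Fintype ι] {q : ι → ℝ}

variable (q) in
/-- Law of independent bits `ω i` with `Pr[ω i = true] = q i`. -/
def bernoulliWeight (ω : ι → Bool) : ℝ :=
  ∏ i, if ω i then q i else 1 - q i

lemma bernoulliWeight_nonneg (hq : ∀ i, q i ∈ Set.Icc 0 1) (ω : ι → Bool) :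
    0 ≤ bernoulliWeight q ω :=
  prod_nonneg fun i _ => by
    have := hq i
    split <;> simp only [Set.mem_Icc, sub_nonneg] at this ⊢ <;> linarith

variable [DecidableEq ι]

variable (q) in
def bernoulliProb (E : (ι → Bool) → Prop) : ℝ :=
  ∑ ω, if E ω then bernoulliWeight q ω else 0

lemma sum_bernoulliWeight_mul_prod (g : ι → Bool → ℝ) :
    ∑ ω, bernoulliWeight q ω * ∏ i, g i (ω i) =
      ∏ i, ((1 - q i) * g i false + q i * g i true) := by
  simp only [bernoulliWeight, ← prod_mul_distrib]
  rw [← Fintype.prod_sum (fun i b => (if b then q i else 1 - q i) * g i b)]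
  refine prod_congr rfl fun i _ => ?_
  simp [add_comm]

lemma sum_bernoulliWeight : ∑ ω, bernoulliWeight q ω = 1 := by
  simpa using sum_bernoulliWeight_mul_prod (q := q) fun _ _ => 1

lemma bernoulliProb_not (E : (ι → Bool) → Prop) :
    bernoulliProb q (fun ω => ¬ E ω) = 1 - bernoulliProb q E := by
  rw [← sum_bernoulliWeight (q := q), bernoulliProb, bernoulliProb, ← sum_sub_distrib]
  refine Fintype.sum_congr _ _ fun ω => ?_
  by_cases h : E ω <;> simp [h]

lemma bernoulliProb_mono (hq : ∀ i, q i ∈ Set.Icc 0 1) {E F : (ι → Bool) → Prop}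
    (h : ∀ ω, E ω → F ω) : bernoulliProb q E ≤ bernoulliProb q F := by
  refine sum_le_sum fun ω _ => ?_
  have := bernoulliWeight_nonneg hq ω
  by_cases hE : E ω <;> by_cases hF : F ω <;> simp_all

lemma bernoulliProb_or_le (hq : ∀ i, q i ∈ Set.Icc 0 1) (E F : (ι → Bool) → Prop) :
    bernoulliProb q (fun ω => E ω ∨ F ω) ≤ bernoulliProb q E + bernoulliProb q F := by
  rw [bernoulliProb, bernoulliProb, bernoulliProb, ← sum_add_distrib]
  refine sum_le_sum fun ω _ => ?_
  have := bernoulliWeight_nonneg hq ω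
  by_cases hE : E ω <;> by_cases hF : F ω <;> simp [hE, hF, this]

lemma bernoulliProb_add_le_and (hq : ∀ i, q i ∈ Set.Icc 0 1) (E F : (ι → Bool) → Prop) :
    bernoulliProb q E + bernoulliProb q F ≤ 1 + bernoulliProb q (fun ω => E ω ∧ F ω) := by
  have h := bernoulliProb_or_le hq (fun ω => ¬ E ω) (fun ω => ¬ F ω)
  have hnot := bernoulliProb_not (q := q) (fun ω => E ω ∧ F ω)
  simp only [bernoulliProb_not, ← not_and_or] at h hnot
  linarith

lemma one_sub_mul_exp_add_mul_exp_le {p s : ℝ} (hp : p ∈ Set.Icc 0 1) (hs : |s| ≤ 1) :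
    (1 - p) * exp (-(s * p)) + p * exp (s * (1 - p)) ≤ exp (s ^ 2 / 4) := by
  obtain ⟨hp0, hp1⟩ := hp
  have bound {u : ℝ} (hu : |u| ≤ 1) : exp u ≤ 1 + u + u ^ 2 := by
    linarith [(abs_le.mp (abs_exp_sub_one_sub_id_le hu)).2]
  have h0 : |-(s * p)| ≤ 1 := by
    rw [abs_neg, abs_mul, abs_of_nonneg hp0]; exact mul_le_one₀ hs hp0 hp1
  have h1 : |s * (1 - p)| ≤ 1 := by
    rw [abs_mul, abs_of_nonneg (sub_nonneg.2 hp1)]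
    exact mul_le_one₀ hs (sub_nonneg.2 hp1) (by linarith)
  calc (1 - p) * exp (-(s * p)) + p * exp (s * (1 - p))
      ≤ (1 - p) * (1 + -(s * p) + (-(s * p)) ^ 2) + p * (1 + s * (1 - p) + (s * (1 - p)) ^ 2) :=
        add_le_add (mul_le_mul_of_nonneg_left (bound h0) (sub_nonneg.2 hp1))
          (mul_le_mul_of_nonneg_left (bound h1) hp0)
    _ = 1 + s ^ 2 * (p * (1 - p)) := by ring
    _ ≤ 1 + s ^ 2 / 4 := by nlinarith [sq_nonneg s, sq_nonneg (2 * p - 1)]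
    _ ≤ exp (s ^ 2 / 4) := by linarith [add_one_le_exp (s ^ 2 / 4)]

theorem bernoulliProb_le_sum_le_exp (hq : ∀ i, q i ∈ Set.Icc 0 1) {c : ι → ℝ}
    (hc : ∀ i, |c i| ≤ 1) {r : ℝ} (hr0 : 0 ≤ r) (hr : r ≤ Fintype.card ι) :
    bernoulliProb q (fun ω => r ≤ ∑ i, c i * ((if ω i then 1 else 0) - q i)) ≤
      exp (-(3 * r ^ 2) / (4 * Fintype.card ι)) := by
  set n : ℝ := (Fintype.card ι : ℝ)
  -- when `n = 0` also `r = 0`, and `t = r / 0 = 0`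
  set t := r / n
  have ht0 : 0 ≤ t := div_nonneg hr0 (Nat.cast_nonneg _)
  have ht1 : t ≤ 1 := div_le_one_of_le₀ hr (Nat.cast_nonneg _)
  calc bernoulliProb q (fun ω => r ≤ ∑ i, c i * ((if ω i then 1 else 0) - q i))
      ≤ ∑ ω, bernoulliWeight q ω *
          exp (t * ∑ i, c i * ((if ω i then 1 else 0) - q i) - t * r) := by
        refine sum_le_sum fun ω _ => ?_
        have hw := bernoulliWeight_nonneg hq ω
        split_ifs with h
        · exact le_mul_of_one_le_right hw (one_le_exp (by nlinarith))
        · positivity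
    _ = exp (-(t * r)) * ∑ ω, bernoulliWeight q ω *
          ∏ i, exp (t * (c i * ((if ω i then 1 else 0) - q i))) := by
        rw [mul_sum]
        refine Fintype.sum_congr _ _ fun ω => ?_
        rw [← exp_sum, ← mul_sum, mul_left_comm, ← exp_add]
        ring_nf
    _ ≤ exp (-(t * r)) * ∏ _i : ι, exp (t ^ 2 / 4) := by
        rw [sum_bernoulliWeight_mul_prod fun i b => exp (t * (c i * ((if b then 1 else 0) - q i)))]
        simp only [Bool.false_eq_true, if_false, if_true, zero_sub, mul_neg, ← mul_assoc]
        gcongr with i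
        · intro i _
          have := (hq i).1
          have := sub_nonneg.2 (hq i).2
          positivity
        · have hs : |t * c i| ≤ 1 := by
            rw [abs_mul, abs_of_nonneg ht0]; exact mul_le_one₀ ht1 (abs_nonneg _) (hc i)
          refine (one_sub_mul_exp_add_mul_exp_le (hq i) hs).trans (exp_le_exp.2 ?_)
          have : (t * c i) ^ 2 ≤ t ^ 2 := by
            rw [sq_le_sq, abs_mul, abs_of_nonneg ht0]
            exact mul_le_of_le_one_right ht0 (hc i)
          linarith
    _ = exp (-(3 * r ^ 2) / (4 * n)) := by
        rw [prod_const, card_univ, ← exp_nat_mul, ← exp_add]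
        congr 1
        rcases eq_or_ne n 0 with hn | hn
        · simp [t, hn]
        · simp only [t, n] at hn ⊢
          field_simp
          ring

theorem one_sub_two_mul_exp_le_bernoulliProb_abs_le (hq : ∀ i, q i ∈ Set.Icc 0 1) {c : ι → ℝ}
    (hc : ∀ i, |c i| ≤ 1) {r : ℝ} (hr0 : 0 ≤ r) (hr : r ≤ Fintype.card ι) :
    1 - 2 * exp (-(3 * r ^ 2) / (4 * Fintype.card ι)) ≤
      bernoulliProb q (fun ω => |∑ i, c i * ((if ω i then 1 else 0) - q i)| ≤ r) := by
  have hup := bernoulliProb_le_sum_le_exp hq hc hr0 hr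
  have hdown := bernoulliProb_le_sum_le_exp hq (c := fun i => -c i) (by simpa) hr0 hr
  have hsplit := bernoulliProb_mono hq
    (E := fun ω => ¬ |∑ i, c i * ((if ω i then 1 else 0) - q i)| ≤ r)
    (F := fun ω => r ≤ ∑ i, c i * ((if ω i then 1 else 0) - q i) ∨
      r ≤ ∑ i, -c i * ((if ω i then 1 else 0) - q i)) fun ω h => by
    simp only [neg_mul, sum_neg_distrib]
    rcases lt_abs.mp (not_le.mp h) with h | h
    exacts [Or.inl h.le, Or.inr h.le]
  have hor := hsplit.trans (bernoulliProb_or_le hq _ _)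
  rw [bernoulliProb_not] at hor
  linarith

end ProductBernoulli

section FlippingNoise

open Finset Real

variable {X : Type} {N : ℕ}

/-- `Pr[ẑ_a = 1]` under the flipping noise. -/
def flipProb (z : Fin N → Bool) (η0 η1 : ℝ) (a : Fin N) : ℝ :=
  if z a then 1 - η1 else η0

lemma flipProb_mem_Icc (z : Fin N → Bool) {η0 η1 : ℝ} (h0 : η0 ∈ Set.Icc 0 1)
    (h1 : η1 ∈ Set.Icc 0 1) (a : Fin N) : flipProb z η0 η1 a ∈ Set.Icc 0 1 := by
  obtain ⟨h0, h0'⟩ := h0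
  obtain ⟨h1, h1'⟩ := h1
  unfold flipProb
  split <;> constructor <;> linarith

lemma noiseProb_eq_bernoulliProb (z : Fin N → Bool) (η0 η1 : ℝ) (E : (Fin N → Bool) → Prop) :
    noiseProb N z η0 η1 E = bernoulliProb (flipProb z η0 η1) E := by
  unfold noiseProb bernoulliProb bernoulliWeight flipProb
  refine sum_congr rfl fun zh _ => ?_
  split_ifs
  · refine prod_congr rfl fun a _ => ?_
    cases z a <;> cases zh a <;> simp
  · rfl

lemma empFreq_eq_sum (P : Fin N → Prop) : empFreq N P = (∑ a, if P a then 1 else 0) / N := by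
  rw [empFreq, natCast_card_filter]

lemma muOf_eq_prJoint (x : Fin N → X) (w : Fin N → Bool) (i : Bool) :
    muOf N w i = prJoint N x (fun _ => true) w i := by
  simp [muOf, prJoint]

lemma prJoint_false_add_true (x : Fin N → X) (f : X → Bool) (w : Fin N → Bool) :
    prJoint N x f w false + prJoint N x f w true = empFreq N (fun a => f (x a) = true) := by
  simp only [prJoint, empFreq_eq_sum, ← add_div, ← sum_add_distrib]
  congr 1
  refine sum_congr rfl fun a _ => ?_
  cases w a <;> simp

lemma prJoint_le_muOf (x : Fin N → X) (f : X → Bool) (w : Fin N → Bool) (i : Bool) :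
    prJoint N x f w i ≤ muOf N w i := by
  unfold prJoint muOf empFreq
  gcongr
  exact fun h => h.2

lemma prJoint_true_sub_eq_sum (x : Fin N → X) (f : X → Bool) (z zh : Fin N → Bool)
    (η0 η1 : ℝ) :
    prJoint N x f zh true - ((1 - η1) * prJoint N x f z true + η0 * prJoint N x f z false) =
      (∑ a, (if f (x a) then 1 else 0) * ((if zh a then 1 else 0) - flipProb z η0 η1 a)) / N := by
  simp only [prJoint, empFreq_eq_sum, mul_div_assoc', ← add_div, ← sub_div, mul_sum,
    ← sum_add_distrib, ← sum_sub_distrib]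
  congr 1
  refine sum_congr rfl fun a _ => ?_
  unfold flipProb
  cases f (x a) <;> cases z a <;> cases zh a <;> simp

theorem one_sub_two_mul_exp_le_bernoulliProb_abs_prJoint_sub_le (x : Fin N → X) (f : X → Bool)
    (z : Fin N → Bool) {η0 η1 : ℝ} (h0 : η0 ∈ Set.Icc 0 1) (h1 : η1 ∈ Set.Icc 0 1) {δ : ℝ}
    (hδ0 : 0 ≤ δ) (hδ1 : δ ≤ 1) :
    1 - 2 * exp (-(3 * δ ^ 2 * N) / 4) ≤ bernoulliProb (flipProb z η0 η1) (fun zh =>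
      |prJoint N x f zh true - ((1 - η1) * prJoint N x f z true + η0 * prJoint N x f z false)|
        ≤ δ) := by
  have hN : (0 : ℝ) ≤ N := Nat.cast_nonneg N
  have h := one_sub_two_mul_exp_le_bernoulliProb_abs_le (flipProb_mem_Icc z h0 h1)
    (c := fun a => if f (x a) then 1 else 0) (fun a => by split <;> simp)
    (r := δ * N) (by positivity) (by simpa using mul_le_of_le_one_left hN hδ1)
  have hexp : -(3 * (δ * N) ^ 2) / (4 * N) = -(3 * δ ^ 2 * N) / 4 := by
    rcases eq_or_ne (N : ℝ) 0 with hN0 | hN0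
    · simp [hN0]
    · field_simp
  rw [Fintype.card_fin, hexp] at h
  refine h.trans (bernoulliProb_mono (flipProb_mem_Icc z h0 h1) fun zh hzh => ?_)
  rw [prJoint_true_sub_eq_sum, abs_div, Nat.abs_cast]
  exact div_le_of_le_mul₀ hN hδ0 hzh

end FlippingNoise

section Denoising

lemma pos_of_abs_sub_le_mul {ρ a a' : ℝ} (hρ : ρ < 1) (ha : 0 < a) (h : |a' - a| ≤ ρ * a) :
    0 < a' := by
  nlinarith [(abs_le.mp h).1]

lemma mul_bounds_of_abs_sub_le_mul {ρ a b a' b' : ℝ} (hρ : ρ ≤ 1) (ha : 0 ≤ a) (hb : 0 ≤ b)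
    (ha' : |a' - a| ≤ ρ * a) (hb' : |b' - b| ≤ ρ * b) :
    (1 - ρ) ^ 2 * (a * b) ≤ a' * b' ∧ a' * b' ≤ (1 + ρ) ^ 2 * (a * b) := by
  obtain ⟨ha1, ha2⟩ := abs_le.mp ha'
  obtain ⟨hb1, hb2⟩ := abs_le.mp hb'
  have hρa : 0 ≤ (1 - ρ) * a := mul_nonneg (sub_nonneg.2 hρ) ha
  have hρb : 0 ≤ (1 - ρ) * b := mul_nonneg (sub_nonneg.2 hρ) hb
  constructor
  · calc (1 - ρ) ^ 2 * (a * b) = ((1 - ρ) * a) * ((1 - ρ) * b) := by ring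
      _ ≤ a' * b' := mul_le_mul (by linarith) (by linarith) hρb (by linarith)
  · calc a' * b' ≤ ((1 + ρ) * a) * ((1 + ρ) * b) :=
          mul_le_mul (by linarith) (by linarith) (by linarith) (by linarith)
      _ = (1 + ρ) ^ 2 * (a * b) := by ring

lemma div_div_div_bounds_of_abs_sub_le {ε a b c d a' b' c' d' : ℝ} (hε0 : 0 ≤ ε) (hε1 : ε ≤ 1)
    (ha : 0 < a) (hb : 0 < b) (hc : 0 < c) (hd : 0 < d)
    (ha' : |a' - a| ≤ ε / 12 * a) (hb' : |b' - b| ≤ ε / 12 * b)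
    (hc' : |c' - c| ≤ ε / 12 * c) (hd' : |d' - d| ≤ ε / 12 * d) :
    (1 - ε) * (a / b / (c / d)) ≤ a' / b' / (c' / d') ∧
      a' / b' / (c' / d') ≤ (1 + ε) * (a / b / (c / d)) := by
  set ρ := ε / 12 with hρ_def
  have hρ : ρ ≤ 1 := by linarith
  have hρ1 : 0 < 1 - ρ := by linarith
  obtain ⟨hX1, hX2⟩ := mul_bounds_of_abs_sub_le_mul hρ ha.le hd.le ha' hd'
  obtain ⟨hY1, hY2⟩ := mul_bounds_of_abs_sub_le_mul hρ hb.le hc.le hb' hc'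
  have hY : 0 < b * c := mul_pos hb hc
  have hY' : 0 < b' * c' := (by positivity : 0 < (1 - ρ) ^ 2 * (b * c)).trans_le hY1
  have hXY : 0 ≤ a * d * (b * c) := by positivity
  rw [div_div_div_eq, div_div_div_eq, mul_div_assoc', mul_div_assoc',
    div_le_div_iff₀ hY hY', div_le_div_iff₀ hY' hY]
  constructor
  · calc (1 - ε) * (a * d) * (b' * c') ≤ (1 - ε) * (a * d) * ((1 + ρ) ^ 2 * (b * c)) := by
          gcongr
      _ = (1 - ε) * (1 + ρ) ^ 2 * (a * d * (b * c)) := by ring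
      _ ≤ (1 - ρ) ^ 2 * (a * d * (b * c)) := by
          gcongr
          rw [hρ_def]
          nlinarith [pow_nonneg hε0 3]
      _ ≤ a' * d' * (b * c) := by rw [← mul_assoc]; gcongr
  · calc a' * d' * (b * c) ≤ (1 + ρ) ^ 2 * (a * d) * (b * c) := by gcongr
      _ = (1 + ρ) ^ 2 * (a * d * (b * c)) := by ring
      _ ≤ (1 + ε) * (1 - ρ) ^ 2 * (a * d * (b * c)) := by
          gcongr
          rw [hρ_def]
          nlinarith [mul_nonneg hε0 (sub_nonneg.2 hε1), pow_nonneg hε0 3]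
      _ = (1 + ε) * (a * d) * ((1 - ρ) ^ 2 * (b * c)) := by ring
      _ ≤ (1 + ε) * (a * d) * (b' * c') := by gcongr

lemma abs_denoised_sub_le {η0 η1 p0 p1 p0' p1' δ : ℝ} (hsum : p0' + p1' = p0 + p1)
    (h : |p1' - ((1 - η1) * p1 + η0 * p0)| ≤ δ) :
    |(1 - η1) * p0' - η1 * p1' - (1 - η0 - η1) * p0| ≤ δ ∧
      |(1 - η0) * p1' - η0 * p0' - (1 - η0 - η1) * p1| ≤ δ := by
  constructor
  · rwa [show (1 - η1) * p0' - η1 * p1' - (1 - η0 - η1) * p0 =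
      -(p1' - ((1 - η1) * p1 + η0 * p0)) by linear_combination (1 - η1) * hsum, abs_neg]
  · rwa [show (1 - η0) * p1' - η0 * p0' - (1 - η0 - η1) * p1 =
      p1' - ((1 - η1) * p1 + η0 * p0) by linear_combination (-η0) * hsum]

lemma min_div_max_of_pos {a b : ℝ} (ha : 0 < a) (hb : 0 < b) :
    min a b / max a b = min (a / b) (b / a) := by
  rcases le_total a b with h | h
  · rw [min_eq_left h, max_eq_right h, min_eq_left]
    rw [div_le_div_iff₀ hb ha]
    nlinarith
  · rw [min_eq_right h, max_eq_left h, min_eq_right]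
    rw [div_le_div_iff₀ ha hb]
    nlinarith

lemma ratio_bounds_of_abs_sub_le {ε a b c d a' b' c' d' : ℝ} (hε0 : 0 ≤ ε) (hε1 : ε ≤ 1)
    (ha : 0 < a) (hb : 0 < b) (hc : 0 < c) (hd : 0 < d)
    (ha' : |a' - a| ≤ ε / 12 * a) (hb' : |b' - b| ≤ ε / 12 * b)
    (hc' : |c' - c| ≤ ε / 12 * c) (hd' : |d' - d| ≤ ε / 12 * d) :
    0 < b' ∧ 0 < d' ∧ 0 < a' / b' ∧ 0 < c' / d' ∧
      (1 - ε) * (min (a / b) (c / d) / max (a / b) (c / d)) ≤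
        min (a' / b' / (c' / d')) (c' / d' / (a' / b')) ∧
      min (a' / b' / (c' / d')) (c' / d' / (a' / b')) ≤
        (1 + ε) * (min (a / b) (c / d) / max (a / b) (c / d)) := by
  have hε12 : ε / 12 < 1 := by linarith
  obtain ⟨lo, hi⟩ := div_div_div_bounds_of_abs_sub_le hε0 hε1 ha hb hc hd ha' hb' hc' hd'
  obtain ⟨lo', hi'⟩ := div_div_div_bounds_of_abs_sub_le hε0 hε1 hc hd ha hb hc' hd' ha' hb'
  have hb'0 := pos_of_abs_sub_le_mul hε12 hb hb'
  have hd'0 := pos_of_abs_sub_le_mul hε12 hd hd'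
  refine ⟨hb'0, hd'0, div_pos (pos_of_abs_sub_le_mul hε12 ha ha') hb'0,
    div_pos (pos_of_abs_sub_le_mul hε12 hc hc') hd'0, ?_, ?_⟩
  all_goals rw [min_div_max_of_pos (div_pos ha hb) (div_pos hc hd)]
  · rw [mul_min_of_nonneg _ _ (by linarith)]
    exact min_le_min lo lo'
  · rw [mul_min_of_nonneg _ _ (by linarith)]
    exact min_le_min hi hi'

variable {X : Type} {N : ℕ}

theorem denoised_rates_accurate (x : Fin N → X) (f : X → Bool) (z zh : Fin N → Bool)
    {η0 η1 ε lam : ℝ} (hη : η0 + η1 < 1) (hε0 : 0 ≤ ε) (hε1 : ε ≤ 1) (hlam : 0 < lam)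
    (hmin : lam / 2 ≤ min (prJoint N x f z false) (prJoint N x f z true))
    (hP : |prJoint N x f zh true - ((1 - η1) * prJoint N x f z true + η0 * prJoint N x f z false)|
      ≤ ε * (1 - η0 - η1) * lam / 24)
    (hM : |muOf N zh true - ((1 - η1) * muOf N z true + η0 * muOf N z false)|
      ≤ ε * (1 - η0 - η1) * lam / 24) :
    0 < (1 - η1) * muOf N zh false - η1 * muOf N zh true ∧
      0 < (1 - η0) * muOf N zh true - η0 * muOf N zh false ∧
      0 < Gamma0 N x η0 η1 f zh ∧ 0 < Gamma1 N x η0 η1 f zh ∧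
      (1 - ε) * gammaSR N x f z ≤ gammaDelta N x η0 η1 f zh ∧
      gammaDelta N x η0 η1 f zh ≤ (1 + ε) * gammaSR N x f z := by
  have hA : 0 < 1 - η0 - η1 := by linarith
  have hp0 : lam / 2 ≤ prJoint N x f z false := (le_min_iff.mp hmin).1
  have hp1 : lam / 2 ≤ prJoint N x f z true := (le_min_iff.mp hmin).2
  have hμ0 := hp0.trans (prJoint_le_muOf x f z false)
  have hμ1 := hp1.trans (prJoint_le_muOf x f z true)
  have hpos {w : ℝ} (hw : lam / 2 ≤ w) : 0 < (1 - η0 - η1) * w := mul_pos hA (by linarith)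
  -- `δ = (ε / 12) (1 - η₀ - η₁) (λ / 2)` is a relative error `ε / 12` on anything `≥ λ / 2`
  have hrel {w : ℝ} (hw : lam / 2 ≤ w) :
      ε * (1 - η0 - η1) * lam / 24 ≤ ε / 12 * ((1 - η0 - η1) * w) := by
    nlinarith [mul_le_mul_of_nonneg_left hw (by positivity : (0 : ℝ) ≤ ε / 12 * (1 - η0 - η1))]
  have hμsum : muOf N zh false + muOf N zh true = muOf N z false + muOf N z true := by
    simp only [muOf_eq_prJoint x, prJoint_false_add_true]
  obtain ⟨hn0, hn1⟩ := abs_denoised_sub_le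
    ((prJoint_false_add_true x f zh).trans (prJoint_false_add_true x f z).symm) hP
  obtain ⟨hd0, hd1⟩ := abs_denoised_sub_le hμsum hM
  have hrate (i : Bool) :
      rate N x f z i = (1 - η0 - η1) * prJoint N x f z i / ((1 - η0 - η1) * muOf N z i) :=
    (mul_div_mul_left _ _ hA.ne').symm
  rw [gammaSR, gammaDelta, Gamma0, Gamma1, hrate, hrate]
  exact ratio_bounds_of_abs_sub_le hε0 hε1 (hpos hp0) (hpos hμ0) (hpos hp1) (hpos hμ1)
    (hn0.trans (hrel hp0)) (hd0.trans (hrel hμ0)) (hn1.trans (hrel hp1)) (hd1.trans (hrel hμ1))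

end Denoising

open Real in
theorem stmt_3_general {X : Type} (N : ℕ)
    (x : Fin N → X) (z : Fin N → Bool)
    (η0 η1 : ℝ) (hη0 : 0 < η0 ∧ η0 < 1/2) (hη1 : 0 < η1 ∧ η1 < 1/2)
    (f : X → Bool)
    (ε : ℝ) (hε : 0 < ε ∧ ε < 1/2) (lam : ℝ) (hlam : 0 < lam ∧ lam < 1/2)
    (hmin : lam / 2 ≤ min (prJoint N x f z false) (prJoint N x f z true)) :
    1 - 4 * Real.exp (-(ε ^ 2 * (1 - η0 - η1) ^ 2 * lam ^ 2 * N) / 2400) ≤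
      noiseProb N z η0 η1 (fun zh =>
        0 < (1 - η1) * muOf N zh false - η1 * muOf N zh true ∧
        0 < (1 - η0) * muOf N zh true - η0 * muOf N zh false ∧
        0 < Gamma0 N x η0 η1 f zh ∧ 0 < Gamma1 N x η0 η1 f zh ∧
        (1 - ε) * gammaSR N x f z ≤ gammaDelta N x η0 η1 f zh ∧
        gammaDelta N x η0 η1 f zh ≤ (1 + ε) * gammaSR N x f z) := by
  obtain ⟨hε0, hε1⟩ := hε
  obtain ⟨hlam0, hlam1⟩ := hlam
  have h0 : η0 ∈ Set.Icc 0 1 := ⟨hη0.1.le, by linarith⟩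
  have h1 : η1 ∈ Set.Icc 0 1 := ⟨hη1.1.le, by linarith⟩
  have hA : 0 < 1 - η0 - η1 := by linarith
  set δ := ε * (1 - η0 - η1) * lam / 24 with hδ
  have hδ0 : 0 ≤ δ := by positivity
  have hδ1 : δ ≤ 1 := by
    have : ε * (1 - η0 - η1) * lam ≤ 1 := by nlinarith [mul_pos hε0 hA]
    linarith
  have hexp : exp (-(3 * δ ^ 2 * N) / 4) ≤
      exp (-(ε ^ 2 * (1 - η0 - η1) ^ 2 * lam ^ 2 * N) / 2400) := by
    have : 0 ≤ ε ^ 2 * (1 - η0 - η1) ^ 2 * lam ^ 2 * N := by positivity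
    have : 3 * δ ^ 2 * N / 4 = ε ^ 2 * (1 - η0 - η1) ^ 2 * lam ^ 2 * N / 768 := by
      rw [hδ]; ring
    rw [exp_le_exp, neg_div, neg_div]
    linarith
  have hq := flipProb_mem_Icc z h0 h1
  have hP := one_sub_two_mul_exp_le_bernoulliProb_abs_prJoint_sub_le x f z h0 h1 hδ0 hδ1
  have hM := one_sub_two_mul_exp_le_bernoulliProb_abs_prJoint_sub_le x (fun _ => true) z h0 h1
    hδ0 hδ1
  simp only [← muOf_eq_prJoint] at hM
  rw [noiseProb_eq_bernoulliProb]
  refine le_trans ?_ (bernoulliProb_mono hq fun zh (hzh : _ ∧ _) =>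
    denoised_rates_accurate x f z zh (by linarith) hε0.le (by linarith) hlam0 hmin hzh.1 hzh.2)
  refine le_trans ?_ (sub_le_iff_le_add'.2 (bernoulliProb_add_le_and hq _ _))
  linarith

/-- For a fixed classifier `f` with `min_i Pr_D[f=1, Z=i] ≥ λ/2`, with
probability at least `1 − 4·exp(−ε²(1−η0−η1)²λ²N/2400)` the denoised rates are well defined
and positive, and `(1−ε)·γ(f,S) ≤ γ^Δ(f,Ŝ) ≤ (1+ε)·γ(f,S)`. -/
theorem stmt_3 {X : Type} (N : ℕ) (hN : 1 ≤ N)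
    (x : Fin N → X) (z : Fin N → Bool) (y : Fin N → Bool)
    (η0 η1 : ℝ) (hη0 : 0 < η0 ∧ η0 < 1/2) (hη1 : 0 < η1 ∧ η1 < 1/2)
    (hμ0 : 0 < muOf N z false) (hμ1 : 0 < muOf N z true)
    (f : X → Bool)
    (hwd : 0 < max (rate N x f z false) (rate N x f z true))
    (ε : ℝ) (hε : 0 < ε ∧ ε < 1/2) (lam : ℝ) (hlam : 0 < lam ∧ lam < 1/2)
    (hmin : lam / 2 ≤ min (prJoint N x f z false) (prJoint N x f z true)) :
    1 - 4 * Real.exp (-(ε ^ 2 * (1 - η0 - η1) ^ 2 * lam ^ 2 * N) / 2400) ≤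
      noiseProb N z η0 η1 (fun zh =>
        0 < (1 - η1) * muOf N zh false - η1 * muOf N zh true ∧
        0 < (1 - η0) * muOf N zh true - η0 * muOf N zh false ∧
        0 < Gamma0 N x η0 η1 f zh ∧ 0 < Gamma1 N x η0 η1 f zh ∧
        (1 - ε) * gammaSR N x f z ≤ gammaDelta N x η0 η1 f zh ∧
        gammaDelta N x η0 η1 f zh ≤ (1 + ε) * gammaSR N x f z) :=
  stmt_3_general N x z η0 η1 hη0 hη1 f ε hε lam hlam hmin
end
end

section
/- Fix a realization of the noisy attributes and let η := η_0 + η_1 (so η < 1). Let f, g : X → {0,1} be classifiers, ε ∈ (0, 1], λ > 0, and suppose: Pr_D[f ≠ g] := #{a : f(x_a) ≠ g(x_a)}/N ≤ ε·(1−η)·λ/10; the denominators (1−η_1)·μ̂_0 − η_1·μ̂_1 and (1−η_0)·μ̂_1 − η_0·μ̂_0 are positive; (1−η_1)·Pr[g=1,Ẑ=0] − η_1·Pr[g=1,Ẑ=1] ≥ 0.45·(1−η)·λ; and (1−η_0)·Pr[g=1,Ẑ=1] − η_0·Pr[g=1,Ẑ=0] ≥ 0.45·(1−η)·λ. Then for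 each i ∈ {0,1}: (1 − 0.45ε)·Γ_i(g) ≤ Γ_i(f) ≤ (1 + 0.45ε)·Γ_i(g). -/
open scoped Classical

noncomputable section

/-- Empirical Hamming distance `Pr_D[f ≠ g]` between two classifiers on the samples. -/
def hammDist {X : Type} (N : ℕ) (x : Fin N → X) (f g : X → Bool) : ℝ :=
  empFreq N (fun a => f (x a) ≠ g (x a))

/-! Changing the classifier on a fraction `d` of the samples moves each `Pr[f = 1, Ẑ = i]` by at
most `d`, hence each denoised numerator, a difference weighted by `1 - η` and `η`, by at most `d`.
The hypotheses make `d` at most `0.45 ε` times the corresponding numerator of `g`, and the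
denominators do not depend on the classifier. -/

lemma empFreq_le_add_of_imp (N : ℕ) {P Q R : Fin N → Prop} (h : ∀ a, P a → Q a ∨ R a) :
    empFreq N P ≤ empFreq N Q + empFreq N R := by
  unfold empFreq
  rw [← add_div]
  gcongr
  calc ((Finset.univ.filter P).card : ℝ)
      ≤ ((Finset.univ.filter Q ∪ Finset.univ.filter R).card : ℝ) := by
        gcongr
        intro a
        simpa only [Finset.mem_union, Finset.mem_filter, Finset.mem_univ, true_and] using h a
    _ ≤ _ := mod_cast Finset.card_union_le _ _

lemma hammDist_comm {X : Type} (N : ℕ) (x : Fin N → X) (f g : X → Bool) :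
    hammDist N x f g = hammDist N x g f := by
  simp only [hammDist, ne_comm]

lemma prJoint_le_add_hammDist {X : Type} (N : ℕ) (x : Fin N → X) (f g : X → Bool)
    (z' : Fin N → Bool) (i : Bool) :
    prJoint N x f z' i ≤ prJoint N x g z' i + hammDist N x f g := by
  refine empFreq_le_add_of_imp N fun a ha => ?_
  by_cases hg : g (x a) = true
  · exact Or.inl ⟨hg, ha.2⟩
  · exact Or.inr (by simp [ha.1, hg])

lemma abs_prJoint_sub_le_hammDist {X : Type} (N : ℕ) (x : Fin N → X) (f g : X → Bool)
    (z' : Fin N → Bool) (i : Bool) :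
    |prJoint N x f z' i - prJoint N x g z' i| ≤ hammDist N x f g := by
  have hfg := prJoint_le_add_hammDist N x f g z' i
  have hgf := prJoint_le_add_hammDist N x g f z' i
  rw [hammDist_comm] at hgf
  exact abs_sub_le_iff.2 ⟨by linarith, by linarith⟩

/-- The numerator (and, applied to `μ̂`, the denominator) of the denoised rates:
`Γ_0` uses `η = η_1` with `(p, q)` the `Ẑ = 0` and `Ẑ = 1` quantities, `Γ_1` the reverse. -/
def denoisedNum (η p q : ℝ) : ℝ := (1 - η) * p - η * q

lemma Gamma0_eq {X : Type} (N : ℕ) (x : Fin N → X) (η0 η1 : ℝ) (f : X → Bool)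
    (zh : Fin N → Bool) :
    Gamma0 N x η0 η1 f zh =
      denoisedNum η1 (prJoint N x f zh false) (prJoint N x f zh true) /
        denoisedNum η1 (muOf N zh false) (muOf N zh true) := rfl

lemma Gamma1_eq {X : Type} (N : ℕ) (x : Fin N → X) (η0 η1 : ℝ) (f : X → Bool)
    (zh : Fin N → Bool) :
    Gamma1 N x η0 η1 f zh =
      denoisedNum η0 (prJoint N x f zh true) (prJoint N x f zh false) /
        denoisedNum η0 (muOf N zh true) (muOf N zh false) := rfl

lemma abs_denoisedNum_sub_le {η p q p' q' d : ℝ} (hη₀ : 0 ≤ η) (hη₁ : η ≤ 1)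
    (hp : |p - p'| ≤ d) (hq : |q - q'| ≤ d) :
    |denoisedNum η p q - denoisedNum η p' q'| ≤ d :=
  calc |denoisedNum η p q - denoisedNum η p' q'|
      = |(1 - η) * (p - p') - η * (q - q')| := by unfold denoisedNum; ring_nf
    _ ≤ |(1 - η) * (p - p')| + |η * (q - q')| := abs_sub _ _
    _ = (1 - η) * |p - p'| + η * |q - q'| := by
        rw [abs_mul, abs_mul, abs_of_nonneg (sub_nonneg.2 hη₁), abs_of_nonneg hη₀]
    _ ≤ (1 - η) * d + η * d := by gcongr
    _ = d := by ring

lemma div_mem_of_abs_sub_le_mul {A B c D : ℝ} (hD : 0 ≤ D) (h : |A - B| ≤ c * B) :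
    (1 - c) * (B / D) ≤ A / D ∧ A / D ≤ (1 + c) * (B / D) := by
  obtain ⟨hAB, hBA⟩ := abs_sub_le_iff.1 h
  rw [mul_div_assoc', mul_div_assoc']
  exact ⟨by gcongr; linarith, by gcongr; linarith⟩

theorem stmt_6_general {X : Type} (N : ℕ)
    (x : Fin N → X) (zh : Fin N → Bool)
    (η0 η1 : ℝ) (hη0 : 0 < η0 ∧ η0 < 1/2) (hη1 : 0 < η1 ∧ η1 < 1/2)
    (f g : X → Bool) (ε : ℝ) (hε : 0 < ε ∧ ε ≤ 1) (lam : ℝ) (hlam : 0 < lam)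
    (hclose : hammDist N x f g ≤ ε * (1 - (η0 + η1)) * lam / 10)
    (hd0 : 0 < (1 - η1) * muOf N zh false - η1 * muOf N zh true)
    (hd1 : 0 < (1 - η0) * muOf N zh true - η0 * muOf N zh false)
    (hg0 : 0.45 * ((1 - (η0 + η1)) * lam) ≤
      (1 - η1) * prJoint N x g zh false - η1 * prJoint N x g zh true)
    (hg1 : 0.45 * ((1 - (η0 + η1)) * lam) ≤
      (1 - η0) * prJoint N x g zh true - η0 * prJoint N x g zh false) :
    ((1 - 0.45 * ε) * Gamma0 N x η0 η1 g zh ≤ Gamma0 N x η0 η1 f zh ∧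
      Gamma0 N x η0 η1 f zh ≤ (1 + 0.45 * ε) * Gamma0 N x η0 η1 g zh) ∧
    ((1 - 0.45 * ε) * Gamma1 N x η0 η1 g zh ≤ Gamma1 N x η0 η1 f zh ∧
      Gamma1 N x η0 η1 f zh ≤ (1 + 0.45 * ε) * Gamma1 N x η0 η1 g zh) := by
  have hscale : 0 < (1 - (η0 + η1)) * lam := mul_pos (by linarith) hlam
  have hsmall : ∀ n, 0.45 * ((1 - (η0 + η1)) * lam) ≤ n →
      hammDist N x f g ≤ 0.45 * ε * n := fun n hn => by
    nlinarith [mul_le_mul_of_nonneg_left hn hε.1.le, mul_pos hε.1 hscale]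
  have hclose_prJoint := abs_prJoint_sub_le_hammDist N x f g zh
  rw [Gamma0_eq, Gamma0_eq, Gamma1_eq, Gamma1_eq]
  exact ⟨div_mem_of_abs_sub_le_mul hd0.le <|
      (abs_denoisedNum_sub_le hη1.1.le (by linarith) (hclose_prJoint _) (hclose_prJoint _)).trans
        (hsmall _ hg0),
    div_mem_of_abs_sub_le_mul hd1.le <|
      (abs_denoisedNum_sub_le hη0.1.le (by linarith) (hclose_prJoint _) (hclose_prJoint _)).trans
        (hsmall _ hg1)⟩

/-- For a fixed realization of the noisy attributes: if `f` and `g` are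
close in empirical Hamming distance and `g` has large denoised numerators, then
`Γ_i(f) ∈ (1 ± 0.45ε)·Γ_i(g)` for both `i ∈ {0,1}`. -/
theorem stmt_6 {X : Type} (N : ℕ) (hN : 1 ≤ N)
    (x : Fin N → X) (z : Fin N → Bool) (y : Fin N → Bool) (zh : Fin N → Bool)
    (η0 η1 : ℝ) (hη0 : 0 < η0 ∧ η0 < 1/2) (hη1 : 0 < η1 ∧ η1 < 1/2)
    (f g : X → Bool) (ε : ℝ) (hε : 0 < ε ∧ ε ≤ 1) (lam : ℝ) (hlam : 0 < lam)
    (hclose : hammDist N x f g ≤ ε * (1 - (η0 + η1)) * lam / 10)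
    (hd0 : 0 < (1 - η1) * muOf N zh false - η1 * muOf N zh true)
    (hd1 : 0 < (1 - η0) * muOf N zh true - η0 * muOf N zh false)
    (hg0 : 0.45 * ((1 - (η0 + η1)) * lam) ≤
      (1 - η1) * prJoint N x g zh false - η1 * prJoint N x g zh true)
    (hg1 : 0.45 * ((1 - (η0 + η1)) * lam) ≤
      (1 - η0) * prJoint N x g zh true - η0 * prJoint N x g zh false) :
    ((1 - 0.45 * ε) * Gamma0 N x η0 η1 g zh ≤ Gamma0 N x η0 η1 f zh ∧
      Gamma0 N x η0 η1 f zh ≤ (1 + 0.45 * ε) * Gamma0 N x η0 η1 g zh) ∧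
    ((1 - 0.45 * ε) * Gamma1 N x η0 η1 g zh ≤ Gamma1 N x η0 η1 f zh ∧
      Gamma1 N x η0 η1 f zh ≤ (1 + 0.45 * ε) * Gamma1 N x η0 η1 g zh) :=
  stmt_6_general N x zh η0 η1 hη0 hη1 f g ε hε lam hlam hclose hd0 hd1 hg0 hg1
end
end

section
/- Let f : X → {0,1} be any fixed classifier and ε ∈ (0, 1). With probability at least 1 − 2p·exp(−ε²N/6) over the flipping noise, for each i ∈ {1,…,p}: ŵ(f)_i lies in the interval [Σ_{j=1}^p H_{ji}·w(f)_j − ε, Σ_{j=1}^p H_{ji}·w(f)_j + ε]. -/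
/-!
Write `S_i` for the number of samples of the event whose noisy attribute is `i`. It is a sum of
independent Bernoulli variables with mean `Σ_j H_{ji} w_j`, whose moment generating function
satisfies `E[exp (t (S_i - E S_i))] ≤ exp (t² N)` for `|t| ≤ 1` (from `eˢ ≤ 1 + s + s²`).
Markov's inequality with `t = ±ε/2` bounds each two-sided deviation of size `εN` by
`2 exp (-ε² N / 4)`, and a union bound over the `p` attributes finishes the proof.
-/

open scoped Classical

noncomputable section

/-- Probability, over independent flipping noise governed by the stochastic matrix `H`,
of an event on the noisy (non-binary) protected attributes. -/
def noiseProbP (N p : ℕ) (z : Fin N → Fin p) (H : Matrix (Fin p) (Fin p) ℝ)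
    (E : (Fin N → Fin p) → Prop) : ℝ :=
  ∑ zh : Fin N → Fin p, if E zh then ∏ a, H (z a) (zh a) else 0

/-- `w(f)_i` (resp. `ŵ(f)_i`), for the attribute assignment `zz`. -/
def wVec {X : Type} (N p : ℕ) (x : Fin N → X) (y : Fin N → Bool)
    (E' : Set (Bool × Bool)) (f : X → Bool) (zz : Fin N → Fin p) (i : Fin p) : ℝ :=
  empFreq N (fun a => (f (x a), y a) ∈ E' ∧ zz a = i)

/-- `u(f)_i` (resp. `û(f)_i`), for the attribute assignment `zz`. -/
def uVec {X : Type} (N p : ℕ) (x : Fin N → X) (y : Fin N → Bool)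
    (E E' : Set (Bool × Bool)) (f : X → Bool) (zz : Fin N → Fin p) (i : Fin p) : ℝ :=
  empFreq N (fun a => ((f (x a), y a) ∈ E ∧ (f (x a), y a) ∈ E') ∧ zz a = i)

/-- `M`, the maximum ℓ1-norm of a row of `(Hᵀ)⁻¹`. -/
def Mconst (p : ℕ) (H : Matrix (Fin p) (Fin p) ℝ) : ℝ :=
  ⨆ i : Fin p, ∑ j, |(H.transpose)⁻¹ i j|

open Finset Real

theorem sum_mul_exp_mul_indicator_sub_le {ι : Type*} [Fintype ι] [DecidableEq ι] {r : ι → ℝ}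
    (hr0 : ∀ j, 0 ≤ r j) (hr1 : ∑ j, r j = 1) (i : ι) {s : ℝ} (hs : |s| ≤ 1) :
    ∑ j, r j * exp (s * ((if j = i then 1 else 0) - r i)) ≤ exp (s ^ 2) := by
  have hq1 : r i ≤ 1 := hr1 ▸ single_le_sum (fun j _ => hr0 j) (mem_univ i)
  have hfactor : ∀ j, exp (s * ((if j = i then 1 else 0) - r i))
      = exp (-(s * r i)) * (1 + (if j = i then 1 else 0) * (exp s - 1)) := by
    intro j
    split_ifs
    · rw [one_mul, add_sub_cancel, ← exp_add]; ring_nf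
    · ring_nf
  have hmean :
      ∑ j, r j * (1 + (if j = i then 1 else 0) * (exp s - 1)) = 1 + r i * (exp s - 1) := by
    simp only [mul_add, mul_one, sum_add_distrib, hr1, ← mul_assoc, mul_ite, mul_zero,
      ← sum_mul, sum_ite_eq', mem_univ, if_true]
  have htaylor : exp s - 1 - s ≤ s ^ 2 := (abs_le.1 (abs_exp_sub_one_sub_id_le hs)).2
  calc ∑ j, r j * exp (s * ((if j = i then 1 else 0) - r i))
      = exp (-(s * r i)) * (1 + r i * (exp s - 1)) := by
        simp_rw [hfactor, mul_left_comm (r _), ← mul_sum, hmean]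
    _ ≤ exp (-(s * r i)) * exp (r i * (exp s - 1)) := by
        gcongr; linarith [add_one_le_exp (r i * (exp s - 1))]
    _ = exp (r i * (exp s - 1 - s)) := by rw [← exp_add]; ring_nf
    _ ≤ exp (s ^ 2) := exp_le_exp.2 (by nlinarith [hr0 i, sq_nonneg s])

def noiseExpect {N p : ℕ} (z : Fin N → Fin p) (H : Matrix (Fin p) (Fin p) ℝ)
    (g : (Fin N → Fin p) → ℝ) : ℝ :=
  ∑ zh, (∏ a, H (z a) (zh a)) * g zh

def weightedCount {N p : ℕ} (c : Fin N → ℝ) (zz : Fin N → Fin p) (i : Fin p) : ℝ :=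
  ∑ a, c a * if zz a = i then 1 else 0

section NoiseModel

variable {N p : ℕ} (z : Fin N → Fin p) {H : Matrix (Fin p) (Fin p) ℝ}

theorem noiseExpect_prod (φ : Fin N → Fin p → ℝ) :
    noiseExpect z H (fun zh => ∏ a, φ a (zh a)) = ∏ a, ∑ j, H (z a) j * φ a j := by
  rw [prod_univ_sum, Fintype.piFinset_univ]
  exact sum_congr rfl fun zh _ => prod_mul_distrib.symm

theorem noiseExpect_one (hrow : ∀ i, ∑ j, H i j = 1) : noiseExpect z H (fun _ => 1) = 1 := by
  simpa [hrow] using noiseExpect_prod z (H := H) fun _ _ => 1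

theorem noiseExpect_mono (hH : ∀ i j, 0 ≤ H i j) {g g' : (Fin N → Fin p) → ℝ}
    (h : ∀ zh, g zh ≤ g' zh) : noiseExpect z H g ≤ noiseExpect z H g' :=
  sum_le_sum fun zh _ => mul_le_mul_of_nonneg_left (h zh) (prod_nonneg fun _ _ => hH _ _)

theorem noiseExpect_sum {ι : Type*} (s : Finset ι) (g : ι → (Fin N → Fin p) → ℝ) :
    noiseExpect z H (fun zh => ∑ k ∈ s, g k zh) = ∑ k ∈ s, noiseExpect z H (g k) := by
  simp only [noiseExpect, mul_sum]
  exact sum_comm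

theorem noiseExpect_const_mul (C : ℝ) (g : (Fin N → Fin p) → ℝ) :
    noiseExpect z H (fun zh => C * g zh) = C * noiseExpect z H g := by
  simp only [noiseExpect, mul_sum, mul_left_comm C]

theorem noiseExpect_add (g g' : (Fin N → Fin p) → ℝ) :
    noiseExpect z H (fun zh => g zh + g' zh) = noiseExpect z H g + noiseExpect z H g' := by
  simp only [noiseExpect, mul_add, sum_add_distrib]

theorem noiseProbP_eq_noiseExpect (E : (Fin N → Fin p) → Prop) :
    noiseProbP N p z H E = noiseExpect z H (fun zh => if E zh then 1 else 0) := by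
  simp only [noiseProbP, noiseExpect, mul_ite, mul_one, mul_zero]

theorem noiseProbP_le_noiseExpect (hH : ∀ i j, 0 ≤ H i j) {E : (Fin N → Fin p) → Prop}
    {g : (Fin N → Fin p) → ℝ} (hg0 : ∀ zh, 0 ≤ g zh) (hg1 : ∀ zh, E zh → 1 ≤ g zh) :
    noiseProbP N p z H E ≤ noiseExpect z H g := by
  rw [noiseProbP_eq_noiseExpect]
  refine noiseExpect_mono z hH fun zh => ?_
  split_ifs with h
  exacts [hg1 zh h, hg0 zh]

theorem noiseProbP_le_sum_of_imp (hH : ∀ i j, 0 ≤ H i j) {ι : Type*} [Fintype ι]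
    {E : (Fin N → Fin p) → Prop} {B : ι → (Fin N → Fin p) → Prop}
    (h : ∀ zh, E zh → ∃ k, B k zh) :
    noiseProbP N p z H E ≤ ∑ k, noiseProbP N p z H (B k) := by
  simp_rw [noiseProbP_eq_noiseExpect z (B _), ← noiseExpect_sum]
  refine noiseProbP_le_noiseExpect z hH (fun zh => sum_nonneg fun k _ => ?_) fun zh hE => ?_
  · split_ifs <;> norm_num
  · obtain ⟨k, hk⟩ := h zh hE
    refine le_of_eq_of_le (if_pos hk).symm
      (single_le_sum (f := fun k => if B k zh then (1 : ℝ) else 0) (fun k _ => ?_) (mem_univ k))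
    split_ifs <;> norm_num

theorem noiseProbP_eq_one_sub_not (hrow : ∀ i, ∑ j, H i j = 1)
    (E : (Fin N → Fin p) → Prop) :
    noiseProbP N p z H E = 1 - noiseProbP N p z H (fun zh => ¬ E zh) := by
  rw [eq_sub_iff_add_eq, ← noiseExpect_one z hrow, noiseProbP_eq_noiseExpect,
    noiseProbP_eq_noiseExpect, ← noiseExpect_add]
  congr 1
  funext zh
  split_ifs <;> simp_all

theorem sum_mul_weightedCount (c : Fin N → ℝ) (i : Fin p) :
    ∑ j, H j i * weightedCount c z j = ∑ a, c a * H (z a) i := by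
  simp only [weightedCount, mul_sum]
  rw [sum_comm]
  refine sum_congr rfl fun a _ => ?_
  simp [mul_comm]

theorem noiseExpect_exp_le (hH : ∀ i j, 0 ≤ H i j) (hrow : ∀ i, ∑ j, H i j = 1)
    {c : Fin N → ℝ} (hc : ∀ a, |c a| ≤ 1) (i : Fin p) {t : ℝ} (ht : |t| ≤ 1) :
    noiseExpect z H
        (fun zh => exp (t * (weightedCount c zh i - ∑ j, H j i * weightedCount c z j)))
      ≤ exp (t ^ 2 * N) := by
  have hsplit : ∀ zh : Fin N → Fin p,
      exp (t * (weightedCount c zh i - ∑ j, H j i * weightedCount c z j))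
        = ∏ a, exp (t * c a * ((if zh a = i then 1 else 0) - H (z a) i)) := by
    intro zh
    rw [sum_mul_weightedCount, ← exp_sum, weightedCount, ← sum_sub_distrib, mul_sum]
    exact congrArg exp (sum_congr rfl fun a _ => by ring)
  simp_rw [hsplit]
  refine (noiseExpect_prod z fun a j =>
    exp (t * c a * ((if j = i then 1 else 0) - H (z a) i))).trans_le ?_
  calc ∏ a, ∑ j, H (z a) j * exp (t * c a * ((if j = i then 1 else 0) - H (z a) i))
      ≤ ∏ _a : Fin N, exp (t ^ 2) := by
        refine prod_le_prod (fun a _ => sum_nonneg fun j _ => by have := hH (z a) j; positivity)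
          fun a _ => ?_
        have hs : |t * c a| ≤ 1 := by
          rw [abs_mul]; exact mul_le_one₀ ht (abs_nonneg _) (hc a)
        refine (sum_mul_exp_mul_indicator_sub_le (hH (z a)) (hrow (z a)) i hs).trans
          (exp_le_exp.2 ?_)
        have := (sq_le_one_iff_abs_le_one (c a)).2 (hc a)
        rw [mul_pow]
        nlinarith [sq_nonneg t]
    _ = exp (t ^ 2 * N) := by
        rw [prod_const, card_univ, Fintype.card_fin, ← exp_nat_mul, mul_comm]

theorem noiseProbP_abs_sub_ge_le (hH : ∀ i j, 0 ≤ H i j) (hrow : ∀ i, ∑ j, H i j = 1)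
    {c : Fin N → ℝ} (hc : ∀ a, |c a| ≤ 1) (i : Fin p) {ε : ℝ} (hε0 : 0 ≤ ε)
    (hε2 : ε ≤ 2) :
    noiseProbP N p z H
        (fun zh => ε * N ≤ |weightedCount c zh i - ∑ j, H j i * weightedCount c z j|)
      ≤ 2 * exp (-(ε ^ 2 * N) / 4) := by
  set D := fun zh => weightedCount c zh i - ∑ j, H j i * weightedCount c z j
  have ht : |ε / 2| ≤ 1 := by rw [abs_of_nonneg (by positivity)]; linarith
  have ht' : |-(ε / 2)| ≤ 1 := by rwa [abs_neg]
  have hg1 : ∀ zh, ε * N ≤ |D zh| →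
      1 ≤ exp (-(ε ^ 2 * N / 2)) * (exp (ε / 2 * D zh) + exp (-(ε / 2) * D zh)) := by
    intro zh h
    simp only [mul_add, ← exp_add]
    rcases le_abs'.1 h with h | h
    · have := one_le_exp (x := -(ε ^ 2 * N / 2) + -(ε / 2) * D zh) (by nlinarith)
      linarith [exp_pos (-(ε ^ 2 * N / 2) + ε / 2 * D zh)]
    · have := one_le_exp (x := -(ε ^ 2 * N / 2) + ε / 2 * D zh) (by nlinarith)
      linarith [exp_pos (-(ε ^ 2 * N / 2) + -(ε / 2) * D zh)]
  calc noiseProbP N p z H (fun zh => ε * N ≤ |D zh|)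
      ≤ noiseExpect z H
          (fun zh => exp (-(ε ^ 2 * N / 2)) * (exp (ε / 2 * D zh) + exp (-(ε / 2) * D zh))) :=
        noiseProbP_le_noiseExpect z hH (fun zh => by positivity) hg1
    _ ≤ exp (-(ε ^ 2 * N / 2)) * (exp ((ε / 2) ^ 2 * N) + exp ((-(ε / 2)) ^ 2 * N)) := by
        rw [noiseExpect_const_mul, noiseExpect_add]
        gcongr
        exacts [noiseExpect_exp_le z hH hrow hc i ht, noiseExpect_exp_le z hH hrow hc i ht']
    _ = 2 * exp (-(ε ^ 2 * N) / 4) := by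
        rw [neg_sq, ← two_mul, mul_left_comm, ← exp_add]
        ring_nf

end NoiseModel

theorem wVec_eq_weightedCount_div {X : Type} (N p : ℕ) (x : Fin N → X) (y : Fin N → Bool)
    (E' : Set (Bool × Bool)) (f : X → Bool) (zz : Fin N → Fin p) (i : Fin p) :
    wVec N p x y E' f zz i
      = weightedCount (fun a => if (f (x a), y a) ∈ E' then 1 else 0) zz i / N := by
  rw [wVec, empFreq, card_filter, weightedCount]
  push_cast
  congr 1
  refine sum_congr rfl fun a _ => ?_
  by_cases h1 : (f (x a), y a) ∈ E' <;> by_cases h2 : zz a = i <;> simp [h1, h2]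

theorem div_mem_Icc_of_abs_sub_lt {S μ ε n : ℝ} (hn : 0 < n) (h : |S - μ| < ε * n) :
    S / n ∈ Set.Icc (μ / n - ε) (μ / n + ε) := by
  rw [← Set.mem_Icc_iff_abs_le, ← sub_div, abs_div, abs_of_pos hn, div_le_iff₀ hn,
    abs_sub_comm]
  exact h.le

theorem stmt_10_general {X : Type} (N p : ℕ) (hN : 1 ≤ N)
    (x : Fin N → X) (z : Fin N → Fin p) (y : Fin N → Bool)
    (H : Matrix (Fin p) (Fin p) ℝ)
    (hH01 : ∀ i j, 0 ≤ H i j ∧ H i j ≤ 1) (hrow : ∀ i, ∑ j, H i j = 1)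
    (E' : Set (Bool × Bool)) (f : X → Bool)
    (ε : ℝ) (hε : 0 < ε ∧ ε < 1) :
    1 - 2 * p * Real.exp (-(ε ^ 2 * N) / 6) ≤
      noiseProbP N p z H (fun zh => ∀ i : Fin p,
        wVec N p x y E' f zh i ∈ Set.Icc
          ((∑ j, H j i * wVec N p x y E' f z j) - ε)
          ((∑ j, H j i * wVec N p x y E' f z j) + ε)) := by
  set c : Fin N → ℝ := fun a => if (f (x a), y a) ∈ E' then 1 else 0
  have hc : ∀ a, |c a| ≤ 1 := fun a => by by_cases h : (f (x a), y a) ∈ E' <;> simp [c, h]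
  have hH : ∀ i j, 0 ≤ H i j := fun i j => (hH01 i j).1
  rw [noiseProbP_eq_one_sub_not z hrow, sub_le_sub_iff_left]
  refine (noiseProbP_le_sum_of_imp z hH
    (B := fun i zh => ε * N ≤ |weightedCount c zh i - ∑ j, H j i * weightedCount c z j|)
    fun zh hzh => ?_).trans ?_
  · by_contra! hdev
    refine hzh fun i => ?_
    simp_rw [wVec_eq_weightedCount_div, mul_div_assoc', ← sum_div]
    exact div_mem_Icc_of_abs_sub_lt (by exact_mod_cast hN) (hdev i)
  calc ∑ i, noiseProbP N p z H
          (fun zh => ε * N ≤ |weightedCount c zh i - ∑ j, H j i * weightedCount c z j|)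
      ≤ ∑ _i : Fin p, 2 * exp (-(ε ^ 2 * N) / 4) := sum_le_sum fun i _ =>
        noiseProbP_abs_sub_ge_le z hH hrow hc i hε.1.le (by linarith [hε.2])
    _ ≤ 2 * p * exp (-(ε ^ 2 * N) / 6) := by
        rw [sum_const, card_univ, Fintype.card_fin, nsmul_eq_mul, ← mul_assoc,
          mul_comm (p : ℝ) 2]
        gcongr 2 * p * exp ?_
        linarith [show 0 ≤ ε ^ 2 * N by positivity]

/-- For any fixed classifier `f` and `ε ∈ (0,1)`, with probability at least
`1 − 2p·exp(−ε²N/6)` over the flipping noise, `ŵ(f)_i ∈ Σ_j H_{ji}·w(f)_j ± ε` for each `i`. -/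
theorem stmt_10 {X : Type} (N p : ℕ) (hN : 1 ≤ N) (hp : 2 ≤ p)
    (x : Fin N → X) (z : Fin N → Fin p) (y : Fin N → Bool)
    (H : Matrix (Fin p) (Fin p) ℝ)
    (hH01 : ∀ i j, 0 ≤ H i j ∧ H i j ≤ 1) (hrow : ∀ i, ∑ j, H i j = 1)
    (hdiag : ∀ i, 1/2 < H i i)
    (E' : Set (Bool × Bool)) (f : X → Bool)
    (ε : ℝ) (hε : 0 < ε ∧ ε < 1) :
    1 - 2 * p * Real.exp (-(ε ^ 2 * N) / 6) ≤
      noiseProbP N p z H (fun zh => ∀ i : Fin p,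
        wVec N p x y E' f zh i ∈ Set.Icc
          ((∑ j, H j i * wVec N p x y E' f z j) - ε)
          ((∑ j, H j i * wVec N p x y E' f z j) + ε)) :=
  stmt_10_general N p hN x z y H hH01 hrow E' f ε hε
end
end

section
/- Let f : X → {0,1} be any fixed classifier and ε ∈ (0, 1). With probability at least 1 − 2p·exp(−ε²N/6) over the flipping noise, for each i ∈ {1,…,p}: w(f)_i lies in the interval [((Hᵀ)^{−1}ŵ(f))_i − εM, ((Hᵀ)^{−1}ŵ(f))_i + εM]. -/
open scoped Classical

noncomputable section

namespace Stmt11Aux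

open Finset Real

/-- The product weight of a noisy assignment. -/
def nu (N p : ℕ) (z : Fin N → Fin p) (H : Matrix (Fin p) (Fin p) ℝ)
    (zh : Fin N → Fin p) : ℝ :=
  ∏ a, H (z a) (zh a)

variable {N p : ℕ} {z : Fin N → Fin p} {H : Matrix (Fin p) (Fin p) ℝ}

lemma nu_nonneg (hH : ∀ i j, 0 ≤ H i j) (zh : Fin N → Fin p) :
    0 ≤ nu N p z H zh :=
  Finset.prod_nonneg fun a _ => hH _ _

lemma noiseProbP_eq (E : (Fin N → Fin p) → Prop) :
    noiseProbP N p z H E = ∑ zh : Fin N → Fin p, if E zh then nu N p z H zh else 0 := rfl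

lemma sum_nu (hrow : ∀ i, ∑ j, H i j = 1) :
    ∑ zh : Fin N → Fin p, nu N p z H zh = 1 := by
  have := (Fintype.prod_sum (fun (a : Fin N) (k : Fin p) => H (z a) k)).symm
  simp only [nu]
  rw [this]
  simp [hrow]

lemma noiseProbP_nonneg (hH : ∀ i j, 0 ≤ H i j) (E : (Fin N → Fin p) → Prop) :
    0 ≤ noiseProbP N p z H E := by
  rw [noiseProbP_eq]
  refine Finset.sum_nonneg fun zh _ => ?_
  split
  · exact nu_nonneg hH zh
  · exact le_rfl

lemma noiseProbP_mono (hH : ∀ i j, 0 ≤ H i j) {A B : (Fin N → Fin p) → Prop}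
    (hAB : ∀ zh, A zh → B zh) :
    noiseProbP N p z H A ≤ noiseProbP N p z H B := by
  rw [noiseProbP_eq, noiseProbP_eq]
  refine Finset.sum_le_sum fun zh _ => ?_
  by_cases h : A zh
  · simp [h, hAB zh h]
  · simp only [h, if_false]
    split
    · exact nu_nonneg hH zh
    · exact le_rfl

lemma noiseProbP_compl (hrow : ∀ i, ∑ j, H i j = 1)
    (E : (Fin N → Fin p) → Prop) :
    noiseProbP N p z H E = 1 - noiseProbP N p z H (fun zh => ¬ E zh) := by
  have h : noiseProbP N p z H E + noiseProbP N p z H (fun zh => ¬ E zh) = 1 := by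
    rw [noiseProbP_eq, noiseProbP_eq, ← Finset.sum_add_distrib, ← sum_nu (z := z) hrow]
    refine Finset.sum_congr rfl fun zh _ => ?_
    by_cases h : E zh <;> simp [h]
  linarith

lemma noiseProbP_union (hH : ∀ i j, 0 ≤ H i j)
    (A : Fin p → (Fin N → Fin p) → Prop) :
    noiseProbP N p z H (fun zh => ∃ j, A j zh) ≤ ∑ j, noiseProbP N p z H (A j) := by
  simp only [noiseProbP_eq]
  rw [Finset.sum_comm]
  refine Finset.sum_le_sum fun zh _ => ?_
  by_cases h : ∃ j, A j zh
  · obtain ⟨j0, hj0⟩ := h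
    rw [if_pos ⟨j0, hj0⟩]
    calc nu N p z H zh = (if A j0 zh then nu N p z H zh else 0) := by simp [hj0]
      _ ≤ ∑ j, if A j zh then nu N p z H zh else 0 := by
          refine Finset.single_le_sum (f := fun j => if A j zh then nu N p z H zh else 0)
            (fun j _ => ?_) (Finset.mem_univ j0)
          split
          · exact nu_nonneg hH zh
          · exact le_rfl
  · rw [if_neg h]
    refine Finset.sum_nonneg fun j _ => ?_
    split
    · exact nu_nonneg hH zh
    · exact le_rfl

lemma noiseProbP_or (hH : ∀ i j, 0 ≤ H i j)
    (A B : (Fin N → Fin p) → Prop) :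
    noiseProbP N p z H (fun zh => A zh ∨ B zh) ≤
      noiseProbP N p z H A + noiseProbP N p z H B := by
  simp only [noiseProbP_eq, ← Finset.sum_add_distrib]
  refine Finset.sum_le_sum fun zh _ => ?_
  have hnu := nu_nonneg (z := z) hH zh
  by_cases hA : A zh
  · by_cases hB : B zh <;> simp [hA, hB] <;> linarith
  · by_cases hB : B zh <;> simp [hA, hB] <;> linarith

/-- `exp t ≤ 1 + t + t²` for `|t| ≤ 1`. -/
lemma exp_le_quad {t : ℝ} (ht : |t| ≤ 1) : Real.exp t ≤ 1 + t + t ^ 2 := by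
  have h := Real.exp_bound ht (n := 2) (by norm_num)
  have h2 : ∑ m ∈ Finset.range 2, t ^ m / (Nat.factorial m) = 1 + t := by
    simp [Finset.sum_range_succ, Nat.factorial]
  rw [h2] at h
  have h3 : |t| ^ 2 = t ^ 2 := sq_abs t
  have h4 : Real.exp t - (1 + t) ≤ t ^ 2 * ((2 + 1 : ℕ) / ((Nat.factorial 2 : ℕ) * 2)) := by
    have := (abs_sub_le_iff.1 h).1
    rw [h3] at this
    exact_mod_cast this
  have h5 : ((2 + 1 : ℕ) : ℝ) / (((Nat.factorial 2 : ℕ) : ℝ) * 2) = 3 / 4 := by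
    norm_num [Nat.factorial]
  rw [h5] at h4
  nlinarith [sq_nonneg t]

/-- Chord bound for the exponential on `[-1, 1]`. -/
lemma exp_chord {u l : ℝ} (hu : |u| ≤ 1) :
    Real.exp (l * u) ≤ (1 - u) / 2 * Real.exp (-l) + (1 + u) / 2 * Real.exp l := by
  obtain ⟨hu1, hu2⟩ := abs_le.1 hu
  have h := convexOn_exp.2 (Set.mem_univ (-l)) (Set.mem_univ l)
    (by linarith : (0:ℝ) ≤ (1 - u) / 2) (by linarith : (0:ℝ) ≤ (1 + u) / 2)
    (by ring : (1 - u) / 2 + (1 + u) / 2 = 1)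
  simp only [smul_eq_mul] at h
  have heq : (1 - u) / 2 * (-l) + (1 + u) / 2 * l = l * u := by ring
  rwa [heq] at h

/-- Per-sample mgf bound: a mean-zero `[-1,1]`-valued variable has mgf at most `exp (l²)`
for `0 ≤ l ≤ 1`. -/
lemma sample_mgf {w r : Fin p → ℝ} (hw : ∀ k, 0 ≤ w k) (hws : ∑ k, w k = 1)
    (hr : ∀ k, |r k| ≤ 1) (hr0 : ∑ k, w k * r k = 0) {l : ℝ} (hl0 : 0 ≤ l) (hl1 : l ≤ 1) :
    ∑ k, w k * Real.exp (l * r k) ≤ Real.exp (l ^ 2) := by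
  have step1 : ∑ k, w k * Real.exp (l * r k) ≤
      ∑ k, w k * ((1 - r k) / 2 * Real.exp (-l) + (1 + r k) / 2 * Real.exp l) := by
    refine Finset.sum_le_sum fun k _ => ?_
    exact mul_le_mul_of_nonneg_left (exp_chord (hr k)) (hw k)
  have step2 : ∑ k, w k * ((1 - r k) / 2 * Real.exp (-l) + (1 + r k) / 2 * Real.exp l) =
      (Real.exp (-l) + Real.exp l) / 2 := by
    have : ∀ k, w k * ((1 - r k) / 2 * Real.exp (-l) + (1 + r k) / 2 * Real.exp l) =
        (Real.exp (-l) + Real.exp l) / 2 * w k +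
          (Real.exp l - Real.exp (-l)) / 2 * (w k * r k) := fun k => by ring
    simp only [this]
    rw [Finset.sum_add_distrib, ← Finset.mul_sum, ← Finset.mul_sum, hws, hr0]
    ring
  have step3 : (Real.exp (-l) + Real.exp l) / 2 ≤ Real.exp (l ^ 2) := by
    have hl : |l| ≤ 1 := by rw [abs_of_nonneg hl0]; exact hl1
    have hnl : |(-l)| ≤ 1 := by rwa [abs_neg]
    have h1 := exp_le_quad hl
    have h2 := exp_le_quad hnl
    have h3 : 1 + l ^ 2 ≤ Real.exp (l ^ 2) := by
      have := Real.add_one_le_exp (l ^ 2)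
      linarith
    nlinarith
  calc ∑ k, w k * Real.exp (l * r k) ≤ _ := step1
    _ = _ := step2
    _ ≤ _ := step3

/-- Chernoff bound for the upper tail of a sum of independent mean-zero
`[-1,1]`-valued variables over the flipping noise. -/
lemma chernoff (hH : ∀ i j, 0 ≤ H i j) (hrow : ∀ i, ∑ j, H i j = 1)
    (r : Fin N → Fin p → ℝ) (hr1 : ∀ a k, |r a k| ≤ 1)
    (hr0 : ∀ a, ∑ k, H (z a) k * r a k = 0)
    {ε : ℝ} (hε0 : 0 < ε) (hε1 : ε ≤ 1) :
    noiseProbP N p z H (fun zh => (N : ℝ) * ε ≤ ∑ a, r a (zh a)) ≤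
      Real.exp (-(ε ^ 2 * N) / 4) := by
  set l : ℝ := ε / 2 with hl_def
  have hl0 : 0 ≤ l := by positivity
  have hl1 : l ≤ 1 := by rw [hl_def]; linarith
  have key : noiseProbP N p z H (fun zh => (N : ℝ) * ε ≤ ∑ a, r a (zh a)) ≤
      Real.exp (-(l * ((N : ℝ) * ε))) *
        ∑ zh : Fin N → Fin p, ∏ a, (H (z a) (zh a) * Real.exp (l * r a (zh a))) := by
    rw [noiseProbP_eq, Finset.mul_sum]
    refine Finset.sum_le_sum fun zh _ => ?_
    have hnu := nu_nonneg (z := z) hH zh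
    have hfac : Real.exp (l * ∑ a, r a (zh a)) * nu N p z H zh =
        ∏ a, (H (z a) (zh a) * Real.exp (l * r a (zh a))) := by
      rw [Finset.mul_sum, Real.exp_sum, nu, mul_comm, ← Finset.prod_mul_distrib]
    rw [← hfac]
    by_cases h : (N : ℝ) * ε ≤ ∑ a, r a (zh a)
    · rw [if_pos h]
      have h1 : l * ((N : ℝ) * ε) ≤ l * ∑ a, r a (zh a) :=
        mul_le_mul_of_nonneg_left h hl0
      have h2 : (1 : ℝ) ≤ Real.exp (-(l * ((N : ℝ) * ε))) * Real.exp (l * ∑ a, r a (zh a)) := by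
        rw [← Real.exp_add]
        rw [show -(l * ((N : ℝ) * ε)) + l * ∑ a, r a (zh a) =
          l * ∑ a, r a (zh a) - l * ((N : ℝ) * ε) by ring]
        rw [← Real.exp_zero]
        exact Real.exp_le_exp.2 (by linarith)
      calc nu N p z H zh = 1 * nu N p z H zh := by ring
        _ ≤ (Real.exp (-(l * ((N : ℝ) * ε))) * Real.exp (l * ∑ a, r a (zh a))) *
              nu N p z H zh := mul_le_mul_of_nonneg_right h2 hnu
        _ = Real.exp (-(l * ((N : ℝ) * ε))) *
              (Real.exp (l * ∑ a, r a (zh a)) * nu N p z H zh) := by ring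
    · rw [if_neg h]
      positivity
  have swap : ∑ zh : Fin N → Fin p, ∏ a, (H (z a) (zh a) * Real.exp (l * r a (zh a))) =
      ∏ a, ∑ k, H (z a) k * Real.exp (l * r a k) :=
    (Fintype.prod_sum (fun (a : Fin N) (k : Fin p) => H (z a) k * Real.exp (l * r a k))).symm
  have prodbd : ∏ a : Fin N, (∑ k, H (z a) k * Real.exp (l * r a k)) ≤
      Real.exp ((N : ℝ) * l ^ 2) := by
    have : ∀ a : Fin N, ∑ k, H (z a) k * Real.exp (l * r a k) ≤ Real.exp (l ^ 2) :=
      fun a => sample_mgf (fun k => hH _ _) (hrow _) (hr1 a) (hr0 a) hl0 hl1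
    calc ∏ a : Fin N, (∑ k, H (z a) k * Real.exp (l * r a k)) ≤
        ∏ _a : Fin N, Real.exp (l ^ 2) := by
          refine Finset.prod_le_prod (fun a _ => ?_) (fun a _ => this a)
          exact Finset.sum_nonneg fun k _ => mul_nonneg (hH _ _) (Real.exp_nonneg _)
      _ = Real.exp ((N : ℝ) * l ^ 2) := by
          rw [Finset.prod_const, ← Real.exp_nat_mul]
          simp
  calc noiseProbP N p z H (fun zh => (N : ℝ) * ε ≤ ∑ a, r a (zh a)) ≤
      Real.exp (-(l * ((N : ℝ) * ε))) *
        ∑ zh : Fin N → Fin p, ∏ a, (H (z a) (zh a) * Real.exp (l * r a (zh a))) := key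
    _ = Real.exp (-(l * ((N : ℝ) * ε))) *
        ∏ a, ∑ k, H (z a) k * Real.exp (l * r a k) := by rw [swap]
    _ ≤ Real.exp (-(l * ((N : ℝ) * ε))) * Real.exp ((N : ℝ) * l ^ 2) :=
        mul_le_mul_of_nonneg_left prodbd (Real.exp_nonneg _)
    _ = Real.exp (-(ε ^ 2 * N) / 4) := by
        rw [← Real.exp_add]
        congr 1
        rw [hl_def]
        ring

end Stmt11Aux

/-- For any fixed classifier `f` and `ε ∈ (0,1)`, with probability at least
`1 − 2p·exp(−ε²N/6)` over the flipping noise, `w(f)_i ∈ ((Hᵀ)⁻¹ŵ(f))_i ± εM` for each `i`. -/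
theorem stmt_11 {X : Type} (N p : ℕ) (hN : 1 ≤ N) (hp : 2 ≤ p)
    (x : Fin N → X) (z : Fin N → Fin p) (y : Fin N → Bool)
    (H : Matrix (Fin p) (Fin p) ℝ)
    (hH01 : ∀ i j, 0 ≤ H i j ∧ H i j ≤ 1) (hrow : ∀ i, ∑ j, H i j = 1)
    (hdiag : ∀ i, 1/2 < H i i)
    (E' : Set (Bool × Bool)) (f : X → Bool)
    (ε : ℝ) (hε : 0 < ε ∧ ε < 1) :
    1 - 2 * p * Real.exp (-(ε ^ 2 * N) / 6) ≤
      noiseProbP N p z H (fun zh => ∀ i : Fin p,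
        wVec N p x y E' f z i ∈ Set.Icc
          ((H.transpose)⁻¹.mulVec (fun j => wVec N p x y E' f zh j) i - ε * Mconst p H)
          ((H.transpose)⁻¹.mulVec (fun j => wVec N p x y E' f zh j) i + ε * Mconst p H)) := by
  classical
  open Stmt11Aux Finset in
  obtain ⟨hε0, hε1⟩ := hε
  have hH : ∀ i j, 0 ≤ H i j := fun i j => (hH01 i j).1
  have hNpos : (0 : ℝ) < N := by exact_mod_cast hN
  -- abbreviations
  set w : Fin p → ℝ := fun i => wVec N p x y E' f z i with hw_def
  set Sw : Fin p → (Fin N → Fin p) → ℝ :=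
    fun j zh => ∑ a, if ((f (x a), y a) ∈ E' ∧ zh a = j) then (1:ℝ) else 0 with hSw_def
  set Sm : Fin p → ℝ :=
    fun j => ∑ a, if (f (x a), y a) ∈ E' then H (z a) j else 0 with hSm_def
  set μ : Fin p → ℝ := fun j => Sm j / N with hμ_def
  have wVec_eq : ∀ (zz : Fin N → Fin p) (i : Fin p),
      wVec N p x y E' f zz i = (∑ a, if ((f (x a), y a) ∈ E' ∧ zz a = i) then (1:ℝ) else 0) / N := by
    intro zz i
    simp only [wVec, empFreq]
    rw [Finset.sum_boole]
    congr!
  -- `Hᵀ w = μ`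
  have hμ : ∀ j, (H.transpose.mulVec w) j = μ j := by
    intro j
    have hterm : ∀ a, (∑ i, if ((f (x a), y a) ∈ E' ∧ z a = i) then H i j else 0)
        = (if (f (x a), y a) ∈ E' then H (z a) j else 0) := by
      intro a
      by_cases hc : (f (x a), y a) ∈ E'
      · simp [hc]
      · simp [hc]
    calc (H.transpose.mulVec w) j = ∑ i, H i j * wVec N p x y E' f z i := by
          simp [Matrix.mulVec, dotProduct, Matrix.transpose_apply, hw_def]
      _ = (∑ i, ∑ a, if ((f (x a), y a) ∈ E' ∧ z a = i) then H i j else 0) / N := by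
          rw [Finset.sum_div]
          refine Finset.sum_congr rfl fun i _ => ?_
          rw [wVec_eq, ← mul_div_assoc, Finset.mul_sum]
          congr 1
          refine Finset.sum_congr rfl fun a _ => ?_
          simp [mul_ite]
      _ = (∑ a, if (f (x a), y a) ∈ E' then H (z a) j else 0) / N := by
          rw [Finset.sum_comm]
          congr 1
          exact Finset.sum_congr rfl fun a _ => hterm a
      _ = μ j := rfl
  -- invertibility
  have hdetH : H.det ≠ 0 := by
    apply det_ne_zero_of_sum_row_lt_diag
    intro k
    have h1 : ∑ j ∈ Finset.univ.erase k, H k j + H k k = 1 := by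
      rw [Finset.sum_erase_add _ _ (Finset.mem_univ k)]; exact hrow k
    have h2 : ∑ j ∈ Finset.univ.erase k, ‖H k j‖ = ∑ j ∈ Finset.univ.erase k, H k j := by
      refine Finset.sum_congr rfl fun j _ => ?_
      exact Real.norm_of_nonneg (hH k j)
    rw [h2, Real.norm_of_nonneg (hH k k)]
    have := hdiag k
    linarith
  have hdetT : IsUnit H.transpose.det := by
    rw [Matrix.det_transpose]
    exact isUnit_iff_ne_zero.2 hdetH
  have hinv : (H.transpose)⁻¹ * H.transpose = 1 := Matrix.nonsing_inv_mul _ hdetT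
  have hw_recover : ∀ i, ((H.transpose)⁻¹.mulVec μ) i = w i := by
    intro i
    have h1 : H.transpose.mulVec w = μ := funext hμ
    have h2 : (H.transpose)⁻¹.mulVec (H.transpose.mulVec w) = w := by
      rw [Matrix.mulVec_mulVec, hinv, Matrix.one_mulVec]
    rw [← h1, h2]
  -- `M` bounds each row sum
  have hM : ∀ i, ∑ j, |(H.transpose)⁻¹ i j| ≤ Mconst p H := by
    intro i
    have h := le_ciSup (f := fun i : Fin p => ∑ j, |(H.transpose)⁻¹ i j|)
      (Set.Finite.bddAbove (Set.finite_range _)) i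
    simpa [Mconst] using h
  -- the good event
  set G : (Fin N → Fin p) → Prop :=
    fun zh => ∀ j, |wVec N p x y E' f zh j - μ j| ≤ ε with hG_def
  -- deterministic step
  have hdet_step : ∀ zh, G zh → ∀ i : Fin p,
      wVec N p x y E' f z i ∈ Set.Icc
        ((H.transpose)⁻¹.mulVec (fun j => wVec N p x y E' f zh j) i - ε * Mconst p H)
        ((H.transpose)⁻¹.mulVec (fun j => wVec N p x y E' f zh j) i + ε * Mconst p H) := by
    intro zh hG i
    have hdiff : (H.transpose)⁻¹.mulVec (fun j => wVec N p x y E' f zh j) i - w i =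
        ∑ j, (H.transpose)⁻¹ i j * (wVec N p x y E' f zh j - μ j) := by
      rw [← hw_recover i]
      simp only [Matrix.mulVec, dotProduct]
      rw [← Finset.sum_sub_distrib]
      exact Finset.sum_congr rfl fun j _ => by ring
    have habs : |(H.transpose)⁻¹.mulVec (fun j => wVec N p x y E' f zh j) i - w i| ≤
        ε * Mconst p H := by
      rw [hdiff]
      calc |∑ j, (H.transpose)⁻¹ i j * (wVec N p x y E' f zh j - μ j)| ≤
          ∑ j, |(H.transpose)⁻¹ i j * (wVec N p x y E' f zh j - μ j)| :=
            Finset.abs_sum_le_sum_abs _ _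
        _ = ∑ j, |(H.transpose)⁻¹ i j| * |wVec N p x y E' f zh j - μ j| := by
            exact Finset.sum_congr rfl fun j _ => abs_mul _ _
        _ ≤ ∑ j, |(H.transpose)⁻¹ i j| * ε := by
            refine Finset.sum_le_sum fun j _ => ?_
            exact mul_le_mul_of_nonneg_left (hG j) (abs_nonneg _)
        _ = (∑ j, |(H.transpose)⁻¹ i j|) * ε := by rw [Finset.sum_mul]
        _ ≤ Mconst p H * ε := mul_le_mul_of_nonneg_right (hM i) (le_of_lt hε0)
        _ = ε * Mconst p H := by ring
    obtain ⟨ha, hb⟩ := abs_le.1 habs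
    constructor
    · simp only [hw_def] at ha hb ⊢
      linarith
    · simp only [hw_def] at ha hb ⊢
      linarith
  -- the tail random variables
  set rU : Fin p → Fin N → Fin p → ℝ := fun j a k =>
    if (f (x a), y a) ∈ E' then ((if k = j then (1:ℝ) else 0) - H (z a) j) else 0 with hrU_def
  set rL : Fin p → Fin N → Fin p → ℝ := fun j a k => -(rU j a k) with hrL_def
  have hrU1 : ∀ j a k, |rU j a k| ≤ 1 := by
    intro j a k
    obtain ⟨h0, h1⟩ := hH01 (z a) j
    simp only [hrU_def]
    by_cases hc : (f (x a), y a) ∈ E'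
    · rw [if_pos hc]
      by_cases hk : k = j
      · rw [if_pos hk, abs_le]; constructor <;> linarith
      · rw [if_neg hk, abs_le]; constructor <;> linarith
    · simp [hc]
  have hrL1 : ∀ j a k, |rL j a k| ≤ 1 := by
    intro j a k
    simp only [hrL_def, abs_neg]
    exact hrU1 j a k
  have hrU0 : ∀ j a, ∑ k, H (z a) k * rU j a k = 0 := by
    intro j a
    simp only [hrU_def]
    by_cases hc : (f (x a), y a) ∈ E'
    · simp only [hc, if_true, mul_sub, Finset.sum_sub_distrib, mul_ite, mul_one, mul_zero]
      rw [Finset.sum_ite_eq' Finset.univ j (fun k => H (z a) k), ← Finset.sum_mul, hrow]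
      simp
    · simp [hc]
  have hrL0 : ∀ j a, ∑ k, H (z a) k * rL j a k = 0 := by
    intro j a
    simp only [hrL_def, mul_neg, Finset.sum_neg_distrib]
    rw [hrU0 j a]
    simp
  have hsumU : ∀ j (zh : Fin N → Fin p), ∑ a, rU j a (zh a) = Sw j zh - Sm j := by
    intro j zh
    simp only [hrU_def, hSw_def, hSm_def, ← Finset.sum_sub_distrib]
    refine Finset.sum_congr rfl fun a _ => ?_
    by_cases hc : (f (x a), y a) ∈ E' <;> by_cases hk : zh a = j <;> simp [hc, hk]
  -- tail bounds
  have hεle1 : ε ≤ 1 := le_of_lt hε1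
  have htailU : ∀ j, noiseProbP N p z H (fun zh => (N:ℝ)*ε ≤ ∑ a, rU j a (zh a)) ≤
      Real.exp (-(ε ^ 2 * N) / 4) :=
    fun j => chernoff hH hrow (rU j) (hrU1 j) (hrU0 j) hε0 hεle1
  have htailL : ∀ j, noiseProbP N p z H (fun zh => (N:ℝ)*ε ≤ ∑ a, rL j a (zh a)) ≤
      Real.exp (-(ε ^ 2 * N) / 4) :=
    fun j => chernoff hH hrow (rL j) (hrL1 j) (hrL0 j) hε0 hεle1
  -- per-coordinate bad-event bound
  have hbadj : ∀ j, noiseProbP N p z H (fun zh => ¬ |wVec N p x y E' f zh j - μ j| ≤ ε) ≤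
      2 * Real.exp (-(ε ^ 2 * N) / 4) := by
    intro j
    have himp : ∀ zh, (¬ |wVec N p x y E' f zh j - μ j| ≤ ε) →
        (((N:ℝ)*ε ≤ ∑ a, rU j a (zh a)) ∨ ((N:ℝ)*ε ≤ ∑ a, rL j a (zh a))) := by
      intro zh hbad
      push_neg at hbad
      have hval : wVec N p x y E' f zh j - μ j = (Sw j zh - Sm j) / N := by
        rw [wVec_eq, hμ_def, div_sub_div_same]
      rcases abs_cases (wVec N p x y E' f zh j - μ j) with ⟨heq, _⟩ | ⟨heq, _⟩
      · left
        rw [heq, hval] at hbad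
        rw [hsumU j zh]
        rw [lt_div_iff₀ hNpos] at hbad
        nlinarith
      · right
        rw [heq, hval] at hbad
        have : ∑ a, rL j a (zh a) = -(Sw j zh - Sm j) := by
          simp only [hrL_def, Finset.sum_neg_distrib, hsumU j zh]
        rw [this]
        rw [← neg_div, neg_sub, lt_div_iff₀ hNpos] at hbad
        nlinarith
    calc noiseProbP N p z H (fun zh => ¬ |wVec N p x y E' f zh j - μ j| ≤ ε) ≤
        noiseProbP N p z H (fun zh =>
          ((N:ℝ)*ε ≤ ∑ a, rU j a (zh a)) ∨ ((N:ℝ)*ε ≤ ∑ a, rL j a (zh a))) :=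
          noiseProbP_mono hH himp
      _ ≤ noiseProbP N p z H (fun zh => (N:ℝ)*ε ≤ ∑ a, rU j a (zh a)) +
          noiseProbP N p z H (fun zh => (N:ℝ)*ε ≤ ∑ a, rL j a (zh a)) :=
          noiseProbP_or hH _ _
      _ ≤ Real.exp (-(ε ^ 2 * N) / 4) + Real.exp (-(ε ^ 2 * N) / 4) :=
          add_le_add (htailU j) (htailL j)
      _ = 2 * Real.exp (-(ε ^ 2 * N) / 4) := by ring
  -- union bound
  have hnotG : noiseProbP N p z H (fun zh => ¬ G zh) ≤
      2 * p * Real.exp (-(ε ^ 2 * N) / 6) := by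
    have hexp : Real.exp (-(ε ^ 2 * N) / 4) ≤ Real.exp (-(ε ^ 2 * N) / 6) := by
      apply Real.exp_le_exp.2
      have h0 : (0:ℝ) ≤ ε ^ 2 * N := by positivity
      linarith
    calc noiseProbP N p z H (fun zh => ¬ G zh) ≤
        noiseProbP N p z H (fun zh => ∃ j, ¬ |wVec N p x y E' f zh j - μ j| ≤ ε) := by
          refine noiseProbP_mono hH fun zh h => ?_
          simp only [hG_def] at h
          push_neg at h
          obtain ⟨j, hj⟩ := h
          exact ⟨j, not_le.2 hj⟩
      _ ≤ ∑ j : Fin p, noiseProbP N p z H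
            (fun zh => ¬ |wVec N p x y E' f zh j - μ j| ≤ ε) :=
          noiseProbP_union hH _
      _ ≤ ∑ _j : Fin p, 2 * Real.exp (-(ε ^ 2 * N) / 4) :=
          Finset.sum_le_sum fun j _ => hbadj j
      _ = p * (2 * Real.exp (-(ε ^ 2 * N) / 4)) := by
          rw [Finset.sum_const, Finset.card_univ, Fintype.card_fin]
          simp [nsmul_eq_mul]
      _ ≤ p * (2 * Real.exp (-(ε ^ 2 * N) / 6)) := by
          have hp0 : (0:ℝ) ≤ p := by positivity
          have h2 : 2 * Real.exp (-(ε ^ 2 * N) / 4) ≤ 2 * Real.exp (-(ε ^ 2 * N) / 6) := by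
            linarith
          exact mul_le_mul_of_nonneg_left h2 hp0
      _ = 2 * p * Real.exp (-(ε ^ 2 * N) / 6) := by ring
  have hPG : 1 - 2 * p * Real.exp (-(ε ^ 2 * N) / 6) ≤ noiseProbP N p z H G := by
    rw [noiseProbP_compl hrow G]
    linarith
  calc 1 - 2 * p * Real.exp (-(ε ^ 2 * N) / 6) ≤ noiseProbP N p z H G := hPG
    _ ≤ _ := noiseProbP_mono hH hdet_step
end
end

section
/- Suppose #{a : z_a = 0} ≥ λN and #{a : z_a = 1} ≥ λN for some λ > 0, let α ∈ (0, 1], and let f be the random classifier that assigns each of the N samples the label 1 independently with probability α (and 0 otherwise). Then with probability at least 1 − 4·exp(−αλN/120000) over the random labels, γ(f,S) is well-defined and γ(f,S) ≥ 0.99. -/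
open scoped Classical

noncomputable section

/-- Probability, over i.i.d. Bernoulli(`α`) labels, of an event on the random labeling. -/
def labelProb (N : ℕ) (α : ℝ) (E : (Fin N → Bool) → Prop) : ℝ :=
  ∑ f : Fin N → Bool, if E f then ∏ a, cond (f a) α (1 - α) else 0

namespace Stmt12

variable {N : ℕ} {α : ℝ}

def w (N : ℕ) (α : ℝ) (f : Fin N → Bool) : ℝ := ∏ a, cond (f a) α (1 - α)

def cnt (s : Finset (Fin N)) (f : Fin N → Bool) : ℕ := (s.filter fun a => f a = true).card

lemma w_nonneg (hα0 : 0 < α) (hα1 : α ≤ 1) (f : Fin N → Bool) : 0 ≤ w N α f :=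
  Finset.prod_nonneg fun a _ => by cases h : f a <;> simp [h] <;> linarith

lemma sum_w_mul_pow (hα0 : 0 < α) (hα1 : α ≤ 1) (s : Finset (Fin N)) (r : ℝ) :
    ∑ f : Fin N → Bool, w N α f * r ^ cnt s f = (α * r + (1 - α)) ^ s.card := by
  have key : ∀ f : Fin N → Bool,
      w N α f * r ^ cnt s f
        = ∏ a, (cond (f a) α (1 - α) * (if a ∈ s then cond (f a) r 1 else 1)) := by
    intro f
    rw [Finset.prod_mul_distrib]
    congr 1
    rw [← Finset.prod_filter, Finset.filter_mem_eq_inter, Finset.univ_inter]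
    rw [cnt, ← Finset.prod_const (b := r)]
    rw [← Finset.prod_filter_mul_prod_filter_not s (fun a => f a = true)
      (fun a => cond (f a) r 1)]
    have h1 : ∀ a ∈ s.filter (fun a => f a = true), cond (f a) r 1 = r := by
      intro a ha; simp only [Finset.mem_filter] at ha; simp [ha.2]
    have h2 : ∀ a ∈ s.filter (fun a => ¬ (f a = true)), cond (f a) r 1 = 1 := by
      intro a ha; simp only [Finset.mem_filter] at ha
      have : f a = false := by simpa using ha.2
      simp [this]
    rw [Finset.prod_congr rfl h1, Finset.prod_congr rfl h2, Finset.prod_const_one, mul_one]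
  simp only [key]
  rw [← Fintype.prod_sum (fun a (b : Bool) => cond b α (1 - α) * (if a ∈ s then cond b r 1 else 1))]
  have : ∀ a : Fin N, (∑ b : Bool, cond b α (1 - α) * (if a ∈ s then cond b r 1 else 1))
      = if a ∈ s then (α * r + (1 - α)) else 1 := by
    intro a
    by_cases h : a ∈ s <;> simp [h, Fintype.sum_bool] <;> ring
  rw [Finset.prod_congr rfl fun a _ => this a]
  rw [← Finset.prod_filter, Finset.filter_mem_eq_inter, Finset.univ_inter, Finset.prod_const]

lemma sum_w (hα0 : 0 < α) (hα1 : α ≤ 1) :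
    ∑ f : Fin N → Bool, w N α f = 1 := by
  have := sum_w_mul_pow (N := N) hα0 hα1 ∅ 1
  simpa using this

lemma labelProb_def (E : (Fin N → Bool) → Prop) :
    labelProb N α E = ∑ f : Fin N → Bool, if E f then w N α f else 0 := rfl

lemma markov_ge (hα0 : 0 < α) (hα1 : α ≤ 1) (s : Finset (Fin N)) (r m : ℝ)
    (hr : 1 ≤ r) :
    labelProb N α (fun f => m ≤ (cnt s f : ℝ)) ≤ (α * r + (1 - α)) ^ s.card / r ^ m := by
  have hr0 : (0 : ℝ) < r := lt_of_lt_of_le one_pos hr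
  have hrm : (0 : ℝ) < r ^ m := Real.rpow_pos_of_pos hr0 m
  rw [labelProb_def, ← sum_w_mul_pow hα0 hα1 s r, Finset.sum_div]
  apply Finset.sum_le_sum
  intro f _
  by_cases hE : m ≤ (cnt s f : ℝ)
  · simp only [hE, if_true]
    rw [le_div_iff₀ hrm]
    have h1 : r ^ m ≤ r ^ (cnt s f : ℝ) := Real.rpow_le_rpow_of_exponent_le hr hE
    rw [Real.rpow_natCast] at h1
    have := w_nonneg hα0 hα1 f
    nlinarith
  · simp only [hE, if_false]
    exact div_nonneg (mul_nonneg (w_nonneg hα0 hα1 f) (by positivity)) hrm.le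

lemma markov_le (hα0 : 0 < α) (hα1 : α ≤ 1) (s : Finset (Fin N)) (r m : ℝ)
    (hr0 : 0 < r) (hr1 : r ≤ 1) :
    labelProb N α (fun f => (cnt s f : ℝ) ≤ m) ≤ (α * r + (1 - α)) ^ s.card / r ^ m := by
  have hrm : (0 : ℝ) < r ^ m := Real.rpow_pos_of_pos hr0 m
  rw [labelProb_def, ← sum_w_mul_pow hα0 hα1 s r, Finset.sum_div]
  apply Finset.sum_le_sum
  intro f _
  by_cases hE : (cnt s f : ℝ) ≤ m
  · simp only [hE, if_true]
    rw [le_div_iff₀ hrm]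
    have h1 : r ^ m ≤ r ^ (cnt s f : ℝ) := Real.rpow_le_rpow_of_exponent_ge hr0 hr1 hE
    rw [Real.rpow_natCast] at h1
    have := w_nonneg hα0 hα1 f
    nlinarith
  · simp only [hE, if_false]
    exact div_nonneg (mul_nonneg (w_nonneg hα0 hα1 f) (by positivity)) hrm.le

lemma labelProb_compl (hα0 : 0 < α) (hα1 : α ≤ 1) (E : (Fin N → Bool) → Prop) :
    labelProb N α E = 1 - labelProb N α (fun f => ¬ E f) := by
  have : labelProb N α E + labelProb N α (fun f => ¬ E f) = 1 := by
    rw [labelProb_def, labelProb_def, ← Finset.sum_add_distrib]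
    rw [← sum_w (N := N) hα0 hα1]
    apply Finset.sum_congr rfl
    intro f _
    by_cases hE : E f <;> simp [hE]
  linarith

lemma labelProb_le4 (hα0 : 0 < α) (hα1 : α ≤ 1)
    (E E1 E2 E3 E4 : (Fin N → Bool) → Prop)
    (h : ∀ f, E f → E1 f ∨ E2 f ∨ E3 f ∨ E4 f) :
    labelProb N α E ≤
      labelProb N α E1 + labelProb N α E2 + labelProb N α E3 + labelProb N α E4 := by
  simp only [labelProb_def, ← Finset.sum_add_distrib]
  apply Finset.sum_le_sum
  intro f _
  have hw := w_nonneg hα0 hα1 f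
  have t1 : (0:ℝ) ≤ if E1 f then w N α f else 0 := by positivity
  have t2 : (0:ℝ) ≤ if E2 f then w N α f else 0 := by positivity
  have t3 : (0:ℝ) ≤ if E3 f then w N α f else 0 := by positivity
  have t4 : (0:ℝ) ≤ if E4 f then w N α f else 0 := by positivity
  by_cases hE : E f
  · simp only [hE, if_true]
    rcases h f hE with h1 | h1 | h1 | h1 <;> simp only [h1, if_true] <;> linarith
  · simp only [hE, if_false]; linarith


lemma log_lb : (1/797 + 1/798 + 1/799 + 1/800 : ℝ) ≤ Real.log (200/199) := by
  have e : (200/199 : ℝ) = (797/796) * ((798/797) * ((799/798) * (800/799))) := by norm_num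
  have l : ∀ p q : ℝ, 0 < q → q < p → 1 - q/p ≤ Real.log (p/q) := by
    intro p q hq hpq
    have hp : (0:ℝ) < p/q := div_pos (hq.trans hpq) hq
    have := Real.one_sub_inv_le_log_of_pos hp
    have hinv : (p/q)⁻¹ = q/p := by
      field_simp
    rw [hinv] at this
    exact this
  have l1 := l 797 796 (by norm_num) (by norm_num)
  have l2 := l 798 797 (by norm_num) (by norm_num)
  have l3 := l 799 798 (by norm_num) (by norm_num)
  have l4 := l 800 799 (by norm_num) (by norm_num)
  rw [e, Real.log_mul (by norm_num) (by norm_num), Real.log_mul (by norm_num) (by norm_num),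
    Real.log_mul (by norm_num) (by norm_num)]
  norm_num at l1 l2 l3 l4 ⊢
  linarith

lemma log_ub : Real.log (199/198) ≤ (1/792 + 1/793 + 1/794 + 1/795 : ℝ) := by
  have e : (199/198 : ℝ) = (793/792) * ((794/793) * ((795/794) * (796/795))) := by norm_num
  have l : ∀ p q : ℝ, 0 < q → q < p → Real.log (p/q) ≤ p/q - 1 :=
    fun p q hq hpq => Real.log_le_sub_one_of_pos (div_pos (hq.trans hpq) hq)
  have l1 := l 793 792 (by norm_num) (by norm_num)
  have l2 := l 794 793 (by norm_num) (by norm_num)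
  have l3 := l 795 794 (by norm_num) (by norm_num)
  have l4 := l 796 795 (by norm_num) (by norm_num)
  rw [e, Real.log_mul (by norm_num) (by norm_num), Real.log_mul (by norm_num) (by norm_num),
    Real.log_mul (by norm_num) (by norm_num)]
  norm_num at l1 l2 l3 l4 ⊢
  linarith

/-- upper-tail scalar bound -/
lemma scalar_upper {α : ℝ} (hα0 : 0 < α) (hα1 : α ≤ 1) (n : ℕ) :
    (α * (200/199) + (1 - α)) ^ n / (200/199 : ℝ) ^ ((200/199) * (α * n)) ≤
      Real.exp (-(α * n) / 120000) := by
  have hn0 : (0:ℝ) ≤ (n:ℝ) := Nat.cast_nonneg n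
  have hnum : (α * (200/199) + (1 - α)) ^ n ≤ Real.exp ((n : ℝ) * (α/199)) := by
    rw [Real.exp_nat_mul]
    apply pow_le_pow_left₀ (by nlinarith)
    have := Real.add_one_le_exp (α/199)
    linarith
  have hden : (200/199 : ℝ) ^ ((200/199) * (α * n))
      = Real.exp ((200/199) * (α * n) * Real.log (200/199)) := by
    rw [Real.rpow_def_of_pos (by norm_num)]
    ring_nf
  calc (α * (200/199) + (1 - α)) ^ n / (200/199 : ℝ) ^ ((200/199) * (α * n))
      ≤ Real.exp ((n : ℝ) * (α/199)) / Real.exp ((200/199) * (α * n) * Real.log (200/199)) := by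
        rw [hden]
        gcongr
    _ = Real.exp ((n : ℝ) * (α/199) - (200/199) * (α * n) * Real.log (200/199)) := by
        rw [Real.exp_sub]
    _ ≤ Real.exp (-(α * n) / 120000) := by
        rw [Real.exp_le_exp]
        have hL := log_lb
        nlinarith [mul_nonneg hα0.le hn0]

/-- lower-tail scalar bound -/
lemma scalar_lower {α : ℝ} (hα0 : 0 < α) (hα1 : α ≤ 1) (n : ℕ) :
    (α * (198/199) + (1 - α)) ^ n / (198/199 : ℝ) ^ ((198/199) * (α * n)) ≤
      Real.exp (-(α * n) / 120000) := by
  have hn0 : (0:ℝ) ≤ (n:ℝ) := Nat.cast_nonneg n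
  have hnum : (α * (198/199) + (1 - α)) ^ n ≤ Real.exp ((n : ℝ) * (-α/199)) := by
    rw [Real.exp_nat_mul]
    apply pow_le_pow_left₀ (by nlinarith)
    have := Real.add_one_le_exp (-α/199)
    linarith
  have hden : (198/199 : ℝ) ^ ((198/199) * (α * n))
      = Real.exp ((198/199) * (α * n) * Real.log (198/199)) := by
    rw [Real.rpow_def_of_pos (by norm_num)]
    ring_nf
  have hlog : Real.log (198/199) = - Real.log (199/198) := by
    rw [← Real.log_inv]; norm_num
  calc (α * (198/199) + (1 - α)) ^ n / (198/199 : ℝ) ^ ((198/199) * (α * n))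
      ≤ Real.exp ((n : ℝ) * (-α/199)) / Real.exp ((198/199) * (α * n) * Real.log (198/199)) := by
        rw [hden]
        gcongr
    _ = Real.exp ((n : ℝ) * (-α/199) - (198/199) * (α * n) * Real.log (198/199)) := by
        rw [Real.exp_sub]
    _ ≤ Real.exp (-(α * n) / 120000) := by
        rw [Real.exp_le_exp, hlog]
        have hU := log_ub
        have hU0 : 0 ≤ Real.log (199/198) := Real.log_nonneg (by norm_num)
        nlinarith [mul_nonneg hα0.le hn0]

lemma card_eq_of_mem_iff {γ : Type*} {s t : Finset γ} (h : ∀ a, a ∈ s ↔ a ∈ t) :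
    s.card = t.card := by
  rw [Finset.ext h]

lemma empFreq_group (z : Fin N → Bool) (b : Bool) :
    empFreq N (fun a => z a = b) = ((Finset.univ.filter fun a => z a = b).card : ℝ) / N := by
  rw [empFreq]
  congr 2
  exact card_eq_of_mem_iff fun a => by simp

lemma empFreq_and (f z : Fin N → Bool) (b : Bool) :
    empFreq N (fun a => f a = true ∧ z a = b)
      = (cnt (Finset.univ.filter fun a => z a = b) f : ℝ) / N := by
  rw [empFreq]
  congr 2
  exact card_eq_of_mem_iff fun a => by simp [cnt, and_comm]

end Stmt12

open Stmt12 in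
/-- If each group `Z = i` contains at least `λN` samples, then the random
classifier assigning label `1` independently with probability `α` has a well-defined
statistical rate `γ(f,S) ≥ 0.99` with probability at least `1 − 4·exp(−αλN/120000)`. -/
theorem stmt_12 (N : ℕ) (hN : 1 ≤ N) (z : Fin N → Bool)
    (lam α : ℝ) (hlam : 0 < lam) (hα : 0 < α ∧ α ≤ 1)
    (h0 : lam * N ≤ ((Finset.univ.filter fun a => z a = false).card : ℝ))
    (h1 : lam * N ≤ ((Finset.univ.filter fun a => z a = true).card : ℝ)) :
    1 - 4 * Real.exp (-(α * lam * N) / 120000) ≤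
      labelProb N α (fun f =>
        0 < max (empFreq N (fun a => f a = true ∧ z a = false) / empFreq N (fun a => z a = false))
            (empFreq N (fun a => f a = true ∧ z a = true) / empFreq N (fun a => z a = true)) ∧
        0.99 ≤
          min (empFreq N (fun a => f a = true ∧ z a = false) / empFreq N (fun a => z a = false))
              (empFreq N (fun a => f a = true ∧ z a = true) / empFreq N (fun a => z a = true)) /
            max (empFreq N (fun a => f a = true ∧ z a = false) / empFreq N (fun a => z a = false))
              (empFreq N (fun a => f a = true ∧ z a = true) / empFreq N (fun a => z a = true))) := by
  obtain ⟨hα0, hα1⟩ := hα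
  have hNpos : (0:ℝ) < N := by exact_mod_cast hN
  set s0 : Finset (Fin N) := Finset.univ.filter fun a => z a = false with hs0
  set s1 : Finset (Fin N) := Finset.univ.filter fun a => z a = true with hs1
  have hn0 : (0:ℝ) < s0.card := lt_of_lt_of_le (mul_pos hlam hNpos) h0
  have hn1 : (0:ℝ) < s1.card := lt_of_lt_of_le (mul_pos hlam hNpos) h1
  have hexp : ∀ n : Finset (Fin N),
      lam * N ≤ (n.card : ℝ) →
      Real.exp (-(α * n.card) / 120000) ≤ Real.exp (-(α * lam * N) / 120000) := by
    intro n hn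
    rw [Real.exp_le_exp]
    have : α * (lam * N) ≤ α * n.card := mul_le_mul_of_nonneg_left hn hα0.le
    nlinarith
  -- the four tail bounds
  have t1 : labelProb N α (fun f => (cnt s0 f : ℝ) ≤ (198/199) * (α * s0.card)) ≤
      Real.exp (-(α * lam * N) / 120000) :=
    le_trans (markov_le hα0 hα1 s0 (198/199) _ (by norm_num) (by norm_num))
      (le_trans (scalar_lower hα0 hα1 s0.card) (hexp s0 h0))
  have t2 : labelProb N α (fun f => (200/199) * (α * s0.card) ≤ (cnt s0 f : ℝ)) ≤
      Real.exp (-(α * lam * N) / 120000) :=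
    le_trans (markov_ge hα0 hα1 s0 (200/199) _ (by norm_num))
      (le_trans (scalar_upper hα0 hα1 s0.card) (hexp s0 h0))
  have t3 : labelProb N α (fun f => (cnt s1 f : ℝ) ≤ (198/199) * (α * s1.card)) ≤
      Real.exp (-(α * lam * N) / 120000) :=
    le_trans (markov_le hα0 hα1 s1 (198/199) _ (by norm_num) (by norm_num))
      (le_trans (scalar_lower hα0 hα1 s1.card) (hexp s1 h1))
  have t4 : labelProb N α (fun f => (200/199) * (α * s1.card) ≤ (cnt s1 f : ℝ)) ≤
      Real.exp (-(α * lam * N) / 120000) :=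
    le_trans (markov_ge hα0 hα1 s1 (200/199) _ (by norm_num))
      (le_trans (scalar_upper hα0 hα1 s1.card) (hexp s1 h1))
  rw [labelProb_compl hα0 hα1]
  refine sub_le_sub_left ?_ 1
  refine le_trans (labelProb_le4 hα0 hα1 _
      (fun f => (cnt s0 f : ℝ) ≤ (198/199) * (α * s0.card))
      (fun f => (200/199) * (α * s0.card) ≤ (cnt s0 f : ℝ))
      (fun f => (cnt s1 f : ℝ) ≤ (198/199) * (α * s1.card))
      (fun f => (200/199) * (α * s1.card) ≤ (cnt s1 f : ℝ))
      (by
        intro f hGf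
        by_contra hcon
        push_neg at hcon
        obtain ⟨hb1, hb2, hb3, hb4⟩ := hcon
        apply hGf
        -- ratio computations
        have hN' : (N:ℝ) ≠ 0 := ne_of_gt hNpos
        have e0 : empFreq N (fun a => f a = true ∧ z a = false) /
            empFreq N (fun a => z a = false) = (cnt s0 f : ℝ) / s0.card := by
          rw [hs0, empFreq_and, empFreq_group, div_div_div_cancel_right₀ hN']
        have e1 : empFreq N (fun a => f a = true ∧ z a = true) /
            empFreq N (fun a => z a = true) = (cnt s1 f : ℝ) / s1.card := by
          rw [hs1, empFreq_and, empFreq_group, div_div_div_cancel_right₀ hN']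
        rw [e0, e1]
        set u0 : ℝ := (cnt s0 f : ℝ) / s0.card with hu0
        set u1 : ℝ := (cnt s1 f : ℝ) / s1.card with hu1
        have hlo0 : (198/199) * α < u0 := by
          rw [hu0, lt_div_iff₀ hn0]; nlinarith
        have hhi0 : u0 < (200/199) * α := by
          rw [hu0, div_lt_iff₀ hn0]; nlinarith
        have hlo1 : (198/199) * α < u1 := by
          rw [hu1, lt_div_iff₀ hn1]; nlinarith
        have hhi1 : u1 < (200/199) * α := by
          rw [hu1, div_lt_iff₀ hn1]; nlinarith
        have hlopos : (0:ℝ) < (198/199) * α := by positivity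
        have hmaxpos : 0 < max u0 u1 :=
          lt_of_lt_of_le (lt_trans hlopos hlo0) (le_max_left _ _)
        refine ⟨hmaxpos, ?_⟩
        have hminlo : (198/199) * α ≤ min u0 u1 := le_min hlo0.le hlo1.le
        have hmaxhi : max u0 u1 ≤ (200/199) * α := max_le hhi0.le hhi1.le
        calc (0.99:ℝ) = ((198/199) * α) / ((200/199) * α) := by
              rw [mul_div_mul_right _ _ (ne_of_gt hα0)]
              norm_num
          _ ≤ min u0 u1 / max u0 u1 :=
              div_le_div₀ (le_trans hlopos.le hminlo) hminlo hmaxpos hmaxhi)) ?_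
  linarith
end
end

section
/- Fix a realization of the noisy attributes and let f : X → {0,1} be a classifier. Suppose μ_0, μ_1, μ̂_0, μ̂_1 > 0, Pr[f=1, Ẑ=0] > 0, Pr[f=1, Ẑ=1] > 0, and Pr_D[f=1, Z=1] > 0, and suppose: (1) Pr[f=1 | Ẑ=0] ≤ Pr[f=1 | Ẑ=1]; (2) Pr[f=1, Z=0 | Ẑ=0] ≤ α_0·Pr[f=1, Z=1 | Ẑ=0] for some α_0 ∈ [0,1]; (3) Pr[f=1, Z=0 | Ẑ=1] ≤ α_1·Pr[f=1, Z=1 | Ẑ=1] for some α_1 ∈ [0,1]. With β_{ij} := μ̂_i/μ_j, the following chain of inequalities holds: γ(f,S) ≤ (α_0·(1+α_1)·β_{00}·γ(f,Ŝ) + α_1·(1+α_0)·β_{10}) / ((1+α_1)·β_{01}·γ(f,Ŝ) + (1+α_0)·β_{11}) ≤ max{α_0, α_1}·μ_1/μ_0. -/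
open scoped Classical

noncomputable section

/-- Conditional empirical probability `Pr[f = 1, Z = j ∣ Ẑ = i]`. -/
def condJoint {X : Type} (N : ℕ) (x : Fin N → X) (f : X → Bool)
    (z zh : Fin N → Bool) (j i : Bool) : ℝ :=
  empFreq N (fun a => f (x a) = true ∧ z a = j ∧ zh a = i) / muOf N zh i

/-!
Split the samples with `f = 1` into the four cells `(Z, Ẑ) = (j, i)`. Hypotheses (2) and (3)
say that inside each noisy group the `Z = 0` cell is at most `α_i` times the `Z = 1` cell, i.e.
it carries at most the share `α_i / (1 + α_i)` of `Pr[f = 1, Ẑ = i]`. Hence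
`Pr[f = 1, Z = 0]` is bounded by a fixed combination of the two noisy masses, and since
`Pr[f = 1, Z = 0] / Pr[f = 1, Z = 1]` increases with that share of their fixed total, it is at
most a weighted mean of `α_0` and `α_1`. The middle term of the claim is exactly `μ_1 / μ_0`
times this mean once `γ(f, Ŝ)` is written as `Pr[f=1 | Ẑ=0] / Pr[f=1 | Ẑ=1]` using (1), and a
weighted mean is at most the maximum.
-/

def weightedMean (w₀ w₁ a₀ a₁ : ℝ) : ℝ :=
  (w₀ * a₀ + w₁ * a₁) / (w₀ + w₁)

lemma weightedMean_le_max {w₀ w₁ : ℝ} (a₀ a₁ : ℝ) (hw₀ : 0 ≤ w₀) (hw₁ : 0 ≤ w₁)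
    (hw : 0 < w₀ + w₁) : weightedMean w₀ w₁ a₀ a₁ ≤ max a₀ a₁ := by
  rw [weightedMean, div_le_iff₀ hw]
  nlinarith [mul_le_mul_of_nonneg_left (le_max_left a₀ a₁) hw₀,
    mul_le_mul_of_nonneg_left (le_max_right a₀ a₁) hw₁]

lemma min_div_max_le_div {a b : ℝ} (ha : 0 ≤ a) (hb : 0 ≤ b) : min a b / max a b ≤ a / b := by
  rcases hb.eq_or_lt with rfl | hb
  · simp [min_eq_right ha]
  · exact div_le_div₀ ha (min_le_left a b) hb (le_max_right a b)

/-- `q₀ / q₁ ≤ a / b` in cross-multiplied form: splitting a fixed total into two parts, the ratio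
of the parts grows with the share of the first one. -/
lemma mul_le_mul_of_share_le {q₀ q₁ a b s : ℝ} (hq : 0 ≤ q₀ + q₁)
    (htotal : a + b = s * (q₀ + q₁)) (hshare : s * q₀ ≤ a) : q₀ * b ≤ a * q₁ := by
  have hb : b = s * (q₀ + q₁) - a := by linarith
  have key : a * q₁ - q₀ * b = (q₀ + q₁) * (a - s * q₀) := by rw [hb]; ring
  have := mul_nonneg hq (sub_nonneg.2 hshare)
  linarith

lemma div_le_weightedMean_of_le_mul {α₀ α₁ e₀ e₁ c₀ c₁ : ℝ} (hα₀ : 0 ≤ α₀) (hα₁ : 0 ≤ α₁)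
    (he₀ : 0 ≤ e₀) (he₁ : 0 ≤ e₁) (hc₀ : 0 ≤ c₀) (h₀ : e₀ ≤ α₀ * c₀) (h₁ : e₁ ≤ α₁ * c₁)
    (hpos : 0 < e₁ + c₁) :
    (e₀ + e₁) / (c₀ + c₁) ≤ weightedMean ((1 + α₁) * (e₀ + c₀)) ((1 + α₀) * (e₁ + c₁)) α₀ α₁ := by
  have hc₁ : 0 < c₁ := by
    by_contra! hc₁
    nlinarith [mul_nonpos_of_nonneg_of_nonpos hα₁ hc₁]
  have hshare₀ : (1 + α₀) * e₀ ≤ α₀ * (e₀ + c₀) := by linarith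
  have hshare₁ : (1 + α₁) * e₁ ≤ α₁ * (e₁ + c₁) := by linarith
  rw [weightedMean, div_le_div_iff₀ (by linarith) (by positivity)]
  refine mul_le_mul_of_share_le (s := (1 + α₀) * (1 + α₁)) (by linarith) (by ring) ?_
  nlinarith [mul_le_mul_of_nonneg_left hshare₀ (by linarith : (0 : ℝ) ≤ 1 + α₁),
    mul_le_mul_of_nonneg_left hshare₁ (by linarith : (0 : ℝ) ≤ 1 + α₀)]

lemma bound_eq_mul_weightedMean {α₀ α₁ m₀ m₁ n₀ n₁ p₀ p₁ : ℝ} (hm₀ : m₀ ≠ 0) (hm₁ : m₁ ≠ 0)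
    (hn₀ : n₀ ≠ 0) (hn₁ : n₁ ≠ 0) (hp₁ : p₁ ≠ 0) :
    (α₀ * (1 + α₁) * (n₀ / m₀) * (p₀ / n₀ / (p₁ / n₁)) + α₁ * (1 + α₀) * (n₁ / m₀)) /
        ((1 + α₁) * (n₀ / m₁) * (p₀ / n₀ / (p₁ / n₁)) + (1 + α₀) * (n₁ / m₁)) =
      m₁ / m₀ * weightedMean ((1 + α₁) * p₀) ((1 + α₀) * p₁) α₀ α₁ := by
  rw [weightedMean]
  field_simp

lemma empFreq_nonneg (N : ℕ) (P : Fin N → Prop) : 0 ≤ empFreq N P := by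
  unfold empFreq
  positivity

lemma empFreq_eq_add (N : ℕ) (P : Fin N → Prop) (g : Fin N → Bool) :
    empFreq N P =
      empFreq N (fun a => P a ∧ g a = false) + empFreq N (fun a => P a ∧ g a = true) := by
  rw [empFreq, empFreq, empFreq, ← add_div,
    ← Finset.card_filter_add_card_filter_not (s := Finset.univ.filter P) (fun a => g a = false)]
  simp only [Finset.filter_filter, Bool.not_eq_false]
  push_cast
  congr!

section Cells

variable {X : Type} {N : ℕ} (x : Fin N → X) (f : X → Bool) (z zh : Fin N → Bool)

def jointCell (j i : Bool) : ℝ :=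
  empFreq N (fun a => f (x a) = true ∧ z a = j ∧ zh a = i)

lemma jointCell_nonneg (j i : Bool) : 0 ≤ jointCell x f z zh j i :=
  empFreq_nonneg _ _

lemma prJoint_eq_jointCell_add (j : Bool) :
    prJoint N x f z j = jointCell x f z zh j false + jointCell x f z zh j true := by
  rw [prJoint, empFreq_eq_add _ _ zh]
  simp only [jointCell, and_assoc]

lemma prJoint_noisy_eq_jointCell_add (i : Bool) :
    prJoint N x f zh i = jointCell x f z zh false i + jointCell x f z zh true i := by
  rw [prJoint, empFreq_eq_add _ _ z]
  simp only [jointCell, and_assoc, and_comm (a := zh _ = i)]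

lemma jointCell_le_mul_of_condJoint_le {i j j' : Bool} {α : ℝ} (hμ : 0 < muOf N zh i)
    (h : condJoint N x f z zh j i ≤ α * condJoint N x f z zh j' i) :
    jointCell x f z zh j i ≤ α * jointCell x f z zh j' i := by
  rw [condJoint, condJoint, ← mul_div_assoc] at h
  exact (div_le_div_iff_of_pos_right hμ).mp h

lemma prJoint_div_le_weightedMean {α₀ α₁ : ℝ} (hα₀ : 0 ≤ α₀) (hα₁ : 0 ≤ α₁)
    (hμh₀ : 0 < muOf N zh false) (hμh₁ : 0 < muOf N zh true) (hp₁ : 0 < prJoint N x f zh true)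
    (h₀ : condJoint N x f z zh false false ≤ α₀ * condJoint N x f z zh true false)
    (h₁ : condJoint N x f z zh false true ≤ α₁ * condJoint N x f z zh true true) :
    prJoint N x f z false / prJoint N x f z true ≤
      weightedMean ((1 + α₁) * prJoint N x f zh false) ((1 + α₀) * prJoint N x f zh true) α₀ α₁ := by
  rw [prJoint_noisy_eq_jointCell_add x f z] at hp₁
  rw [prJoint_eq_jointCell_add x f z zh, prJoint_eq_jointCell_add x f z zh,
    prJoint_noisy_eq_jointCell_add x f z, prJoint_noisy_eq_jointCell_add x f z]
  exact div_le_weightedMean_of_le_mul hα₀ hα₁ (jointCell_nonneg ..) (jointCell_nonneg ..)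
    (jointCell_nonneg ..) (jointCell_le_mul_of_condJoint_le x f z zh hμh₀ h₀)
    (jointCell_le_mul_of_condJoint_le x f z zh hμh₁ h₁) hp₁

end Cells

lemma rate_nonneg {X : Type} (N : ℕ) (x : Fin N → X) (f : X → Bool) (z' : Fin N → Bool)
    (i : Bool) : 0 ≤ rate N x f z' i :=
  div_nonneg (empFreq_nonneg _ _) (empFreq_nonneg _ _)

lemma gammaSR_le_div_rate {X : Type} (N : ℕ) (x : Fin N → X) (f : X → Bool) (z' : Fin N → Bool) :
    gammaSR N x f z' ≤ rate N x f z' false / rate N x f z' true :=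
  min_div_max_le_div (rate_nonneg ..) (rate_nonneg ..)

lemma gammaSR_eq_div_rate {X : Type} {N : ℕ} {x : Fin N → X} {f : X → Bool} {z' : Fin N → Bool}
    (h : rate N x f z' false ≤ rate N x f z' true) :
    gammaSR N x f z' = rate N x f z' false / rate N x f z' true := by
  rw [gammaSR, min_eq_left h, max_eq_right h]

theorem stmt_13_general {X : Type} (N : ℕ)
    (x : Fin N → X) (z : Fin N → Bool) (zh : Fin N → Bool)
    (f : X → Bool)
    (hμ0 : 0 < muOf N z false) (hμ1 : 0 < muOf N z true)
    (hμh0 : 0 < muOf N zh false) (hμh1 : 0 < muOf N zh true)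
    (hp1 : 0 < prJoint N x f zh true)
    (α0 α1 : ℝ) (hα0 : 0 ≤ α0 ∧ α0 ≤ 1) (hα1 : 0 ≤ α1 ∧ α1 ≤ 1)
    (h1 : rate N x f zh false ≤ rate N x f zh true)
    (h2 : condJoint N x f z zh false false ≤ α0 * condJoint N x f z zh true false)
    (h3 : condJoint N x f z zh false true ≤ α1 * condJoint N x f z zh true true) :
    gammaSR N x f z ≤
      (α0 * (1 + α1) * (muOf N zh false / muOf N z false) * gammaSR N x f zh +
          α1 * (1 + α0) * (muOf N zh true / muOf N z false)) /
        ((1 + α1) * (muOf N zh false / muOf N z true) * gammaSR N x f zh +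
          (1 + α0) * (muOf N zh true / muOf N z true)) ∧
    (α0 * (1 + α1) * (muOf N zh false / muOf N z false) * gammaSR N x f zh +
          α1 * (1 + α0) * (muOf N zh true / muOf N z false)) /
        ((1 + α1) * (muOf N zh false / muOf N z true) * gammaSR N x f zh +
          (1 + α0) * (muOf N zh true / muOf N z true)) ≤
      max α0 α1 * (muOf N z true / muOf N z false) := by
  have hw₀ : 0 ≤ (1 + α1) * prJoint N x f zh false :=
    mul_nonneg (by linarith [hα1.1]) (empFreq_nonneg _ _)
  have hw₁ : 0 < (1 + α0) * prJoint N x f zh true := mul_pos (by linarith [hα0.1]) hp1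
  have hm : 0 ≤ muOf N z true / muOf N z false := div_nonneg hμ1.le hμ0.le
  rw [gammaSR_eq_div_rate h1, rate, rate, bound_eq_mul_weightedMean hμ0.ne' hμ1.ne' hμh0.ne'
    hμh1.ne' hp1.ne']
  constructor
  · calc gammaSR N x f z ≤ rate N x f z false / rate N x f z true := gammaSR_le_div_rate ..
      _ = muOf N z true / muOf N z false * (prJoint N x f z false / prJoint N x f z true) := by
        rw [rate, rate, div_div_div_comm, div_div_eq_mul_div]; ring
      _ ≤ _ := mul_le_mul_of_nonneg_left
        (prJoint_div_le_weightedMean x f z zh hα0.1 hα1.1 hμh0 hμh1 hp1 h2 h3) hm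
  · rw [mul_comm (max α0 α1)]
    exact mul_le_mul_of_nonneg_left (weightedMean_le_max α0 α1 hw₀ hw₁.le (by linarith)) hm

/-- Upper bound on the underlying statistical rate `γ(f,S)` in terms of the
noisy statistical rate `γ(f,Ŝ)` for a fixed realization of the noisy attributes. -/
theorem stmt_13 {X : Type} (N : ℕ) (hN : 1 ≤ N)
    (x : Fin N → X) (z : Fin N → Bool) (y : Fin N → Bool) (zh : Fin N → Bool)
    (f : X → Bool)
    (hμ0 : 0 < muOf N z false) (hμ1 : 0 < muOf N z true)
    (hμh0 : 0 < muOf N zh false) (hμh1 : 0 < muOf N zh true)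
    (hp0 : 0 < prJoint N x f zh false) (hp1 : 0 < prJoint N x f zh true)
    (hpz1 : 0 < prJoint N x f z true)
    (α0 α1 : ℝ) (hα0 : 0 ≤ α0 ∧ α0 ≤ 1) (hα1 : 0 ≤ α1 ∧ α1 ≤ 1)
    (h1 : rate N x f zh false ≤ rate N x f zh true)
    (h2 : condJoint N x f z zh false false ≤ α0 * condJoint N x f z zh true false)
    (h3 : condJoint N x f z zh false true ≤ α1 * condJoint N x f z zh true true) :
    gammaSR N x f z ≤
      (α0 * (1 + α1) * (muOf N zh false / muOf N z false) * gammaSR N x f zh +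
          α1 * (1 + α0) * (muOf N zh true / muOf N z false)) /
        ((1 + α1) * (muOf N zh false / muOf N z true) * gammaSR N x f zh +
          (1 + α0) * (muOf N zh true / muOf N z true)) ∧
    (α0 * (1 + α1) * (muOf N zh false / muOf N z false) * gammaSR N x f zh +
          α1 * (1 + α0) * (muOf N zh true / muOf N z false)) /
        ((1 + α1) * (muOf N zh false / muOf N z true) * gammaSR N x f zh +
          (1 + α0) * (muOf N zh true / muOf N z true)) ≤
      max α0 α1 * (muOf N z true / muOf N z false) :=
  stmt_13_general N x z zh f hμ0 hμ1 hμh0 hμh1 hp1 α0 α1 hα0 hα1 h1 h2 h3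
end
end
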